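/- arXiv:2103.03439 — 7 statements merged into one kernel-verified Lean document; each statement's English description precedes it below -/
import Mathlib

section
/- Let p be an odd prime, let n ≥ 1 be an odd natural number with p^a exactly dividing n (a ≥ 0), let l ≥ 2 be a natural number and k an integer. If there exist integers x_1, …, x_l and some j ≥ a+1 such that x_1^n + ⋯ + x_l^n ≡ k (mod p^j), then for every i ≥ 1 there exist integers y_1, …, y_l with y_1^n + ⋯ + y_l^n ≡ k (mod p^i). -/
/-!
A solution modulo `p ^ (a + 1)` can be taken primitive (some `x_t` prime to `p`): otherwise
`p ^ (a + 1) ∣ k` and `1 ^ n + (-1) ^ n + 0 + ⋯ = 0` works. A primitive solution lifts from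
`p ^ j` to `p ^ (j + 1)` by moving a unit coordinate `x` to `x + h p ^ (j - a)`: the change of
`x ^ n` is `n x ^ (n - 1) h p ^ (j - a)` modulo `p ^ (j + 1)`, and `n x ^ (n - 1) / p ^ a` is a
unit mod `p`, so `h` can be chosen to fix the residue. For odd `p` the higher binomial terms
vanish modulo `p ^ (j + 1)` once `j ≥ a + 1`.
-/

open Finset

namespace Nat

theorem factorization_add_two_le {p s : ℕ} (hp : 3 ≤ p) (hs : 2 ≤ s) :
    s.factorization p + 2 ≤ s := by
  set v := s.factorization p
  rcases eq_zero_or_pos v with hv | hv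
  · omega
  calc v + 2 ≤ 1 + v * 2 := by omega
    _ ≤ (1 + 2) ^ v := one_add_le_pow_of_two_add_nonneg (by norm_num) v
    _ ≤ p ^ v := Nat.pow_le_pow_left hp v
    _ ≤ s := Nat.ordProj_le p (by omega)

theorem Prime.pow_dvd_choose_mul_ordProj {p n a s : ℕ} (hp : p.Prime) (hpa : p ^ a ∣ n)
    (hs : s ≠ 0) : p ^ a ∣ n.choose s * p ^ s.factorization p := by
  have hchoose : p ^ a ∣ n.choose s * s := by
    obtain ⟨s, rfl⟩ := Nat.exists_eq_succ_of_ne_zero hs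
    rcases n with _ | n
    · simp
    rw [← Nat.add_one_mul_choose_eq]
    exact hpa.mul_right _
  nth_rw 2 [← Nat.ordProj_mul_ordCompl_eq_self s p] at hchoose
  rw [← mul_assoc] at hchoose
  exact ((Nat.coprime_ordCompl hp hs).pow_left a).dvd_of_dvd_mul_right hchoose

/-- `v_p (n.choose s) ≥ a - v_p s` and `v_p s + 1 ≤ s - 1` for `p ≥ 3`. -/
theorem Prime.pow_dvd_choose_mul_pow {p n a d s : ℕ} (hp : p.Prime) (hp3 : 3 ≤ p)
    (hpa : p ^ a ∣ n) (hd : 1 ≤ d) (hs : 2 ≤ s) :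
    p ^ (a + d + 1) ∣ n.choose s * (p ^ d) ^ s := by
  set v := s.factorization p
  have hv : v + 2 ≤ s := factorization_add_two_le hp3 hs
  obtain ⟨t, ht⟩ := hp.pow_dvd_choose_mul_ordProj hpa (by omega : s ≠ 0)
  have hexp : a + d + 1 + v ≤ a + d * s := by nlinarith
  have : p ^ (a + d + 1) * p ^ v ∣ n.choose s * (p ^ d) ^ s * p ^ v := by
    rw [← pow_add, mul_right_comm, ht, ← pow_mul, mul_right_comm, ← pow_add]
    exact (pow_dvd_pow p hexp).mul_right t
  exact Nat.dvd_of_mul_dvd_mul_right (pow_pos hp.pos v) this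

theorem Prime.pow_dvd_add_mul_pow_pow_sub {R : Type*} [CommRing R] {p n a d : ℕ}
    (hp : p.Prime) (hp3 : 3 ≤ p) (hpa : p ^ a ∣ n) (hd : 1 ≤ d) (x h : R) :
    (p : R) ^ (a + d + 1) ∣ (x + h * p ^ d) ^ n - (x ^ n + n * x ^ (n - 1) * (h * p ^ d)) := by
  rcases n with _ | m
  · simp
  rw [add_comm x, add_pow, sum_range_succ', sum_range_succ']
  simp only [Nat.choose_zero_right, Nat.choose_one_right, pow_zero, pow_one, zero_add,
    Nat.sub_zero, Nat.add_sub_cancel, Nat.cast_one, mul_one, one_mul]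
  convert dvd_sum fun k _ ↦ ?_ using 1
  · push_cast
    ring
  have hterm : ((p ^ (a + d + 1) : ℕ) : R) ∣ ((m + 1).choose (k + 2) * (p ^ d) ^ (k + 2) : ℕ) :=
    Nat.cast_dvd_cast (hp.pow_dvd_choose_mul_pow hp3 hpa hd (by omega))
  push_cast at hterm
  exact hterm.trans ⟨h ^ (k + 2) * x ^ (m - (k + 1)), by ring⟩

end Nat

theorem Int.exists_mul_modEq_of_not_dvd {p : ℕ} (hp : p.Prime) {u : ℤ} (hu : ¬(p : ℤ) ∣ u)
    (c : ℤ) : ∃ h, u * h ≡ c [ZMOD p] := by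
  obtain ⟨r, s, hrs⟩ := (Prime.coprime_iff_not_dvd (Nat.prime_iff_prime_int.mp hp)).mpr hu
  exact ⟨s * c, Int.modEq_iff_dvd.mpr ⟨r * c, by linear_combination -c * hrs⟩⟩

theorem Int.exists_pow_modEq_pow_add {p n a j : ℕ} (hp : p.Prime) (hp3 : 3 ≤ p)
    (hpa : p ^ a ∣ n) (hpa' : ¬p ^ (a + 1) ∣ n) (hj : a + 1 ≤ j) {x : ℤ} (hx : ¬(p : ℤ) ∣ x)
    (c : ℤ) : ∃ y : ℤ, ¬(p : ℤ) ∣ y ∧ y ^ n ≡ x ^ n + p ^ j * c [ZMOD p ^ (j + 1)] := by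
  obtain ⟨m, rfl⟩ := hpa
  have hm : ¬(p : ℤ) ∣ m := fun hdvd ↦
    hpa' (pow_succ p a ▸ mul_dvd_mul_left _ (Int.natCast_dvd_natCast.mp hdvd))
  have hu : ¬(p : ℤ) ∣ m * x ^ (p ^ a * m - 1) := fun hdvd ↦
    ((Nat.prime_iff_prime_int.mp hp).dvd_or_dvd hdvd).elim hm
      fun hxpow ↦ hx (Int.Prime.dvd_pow' hp hxpow)
  obtain ⟨h, hh⟩ := Int.exists_mul_modEq_of_not_dvd hp hu c
  obtain ⟨d, rfl⟩ : ∃ d, j = a + d := ⟨j - a, by omega⟩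
  have hpd : (p : ℤ) ∣ h * p ^ d := (dvd_pow_self _ (by omega)).mul_left h
  refine ⟨x + h * p ^ d, fun hdvd ↦ hx ((dvd_add_left hpd).mp hdvd), ?_⟩
  calc (x + h * p ^ d) ^ (p ^ a * m)
      ≡ x ^ (p ^ a * m) + ↑(p ^ a * m) * x ^ (p ^ a * m - 1) * (h * p ^ d)
          [ZMOD p ^ (a + d + 1)] :=
        (Int.modEq_iff_dvd.mpr (Nat.Prime.pow_dvd_add_mul_pow_pow_sub hp hp3 ⟨m, rfl⟩
          (by omega) x h)).symm
    _ = x ^ (p ^ a * m) + p ^ (a + d) * (m * x ^ (p ^ a * m - 1) * h) := by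
        push_cast
        ring
    _ ≡ x ^ (p ^ a * m) + p ^ (a + d) * c [ZMOD p ^ (a + d + 1)] := by
        rw [pow_succ]
        exact (Int.ModEq.mul_left' hh).add_left _

def HasPrimitiveSolution (l n : ℕ) (k : ℤ) (p j : ℕ) : Prop :=
  ∃ x : Fin l → ℤ, (∑ t, x t ^ n) ≡ k [ZMOD (p : ℤ) ^ j] ∧ ∃ t, ¬(p : ℤ) ∣ x t

theorem Finset.sum_update_univ {ι M : Type*} [Fintype ι] [DecidableEq ι] [AddCommGroup M]
    (f : ι → M) (i : ι) (b : M) : ∑ t, Function.update f i b t = ∑ t, f t + (b - f i) := by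
  rw [sum_update_of_mem (mem_univ i), sum_eq_add_sum_sdiff_singleton_of_mem (mem_univ i) f]
  abel

section Lifting

variable {l n : ℕ} {k : ℤ} {p a : ℕ}

theorem HasPrimitiveSolution.succ (hp : p.Prime) (hp3 : 3 ≤ p) (hpa : p ^ a ∣ n)
    (hpa' : ¬p ^ (a + 1) ∣ n) {j : ℕ} (hj : a + 1 ≤ j) (hsol : HasPrimitiveSolution l n k p j) :
    HasPrimitiveSolution l n k p (j + 1) := by
  obtain ⟨x, hx, i, hi⟩ := hsol
  obtain ⟨c, hc⟩ := Int.modEq_iff_dvd.mp hx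
  obtain ⟨y, hy, hyx⟩ := Int.exists_pow_modEq_pow_add hp hp3 hpa hpa' hj hi c
  refine ⟨Function.update x i y, ?_, i, by simpa using hy⟩
  calc ∑ t, Function.update x i y t ^ n
      = ∑ t, x t ^ n + (y ^ n - x i ^ n) := by
        rw [← Finset.sum_update_univ]
        exact sum_congr rfl fun t _ ↦ Function.apply_update (fun _ z ↦ z ^ n) x i y t
    _ ≡ ∑ t, x t ^ n + (x i ^ n + p ^ j * c - x i ^ n) [ZMOD p ^ (j + 1)] :=
        (hyx.sub_right _).add_left _
    _ = k := by linear_combination -hc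

theorem HasPrimitiveSolution.of_le (hp : p.Prime) (hp3 : 3 ≤ p) (hpa : p ^ a ∣ n)
    (hpa' : ¬p ^ (a + 1) ∣ n) (hsol : HasPrimitiveSolution l n k p (a + 1)) {j : ℕ}
    (hj : a + 1 ≤ j) : HasPrimitiveSolution l n k p j := by
  induction j, hj using Nat.le_induction with
  | base => exact hsol
  | succ j hj ih => exact ih.succ hp hp3 hpa hpa' hj

end Lifting

theorem exists_sum_pow_eq_zero_of_odd {l n : ℕ} (hn : Odd n) (hl : 2 ≤ l) :
    ∃ y : Fin l → ℤ, ∑ t, y t ^ n = 0 ∧ ∃ t, y t = 1 := by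
  obtain ⟨m, rfl⟩ : ∃ m, l = m + 2 := ⟨l - 2, by omega⟩
  refine ⟨Fin.cons 1 (Fin.cons (-1) 0), ?_, 0, rfl⟩
  simp [Fin.sum_univ_succ, hn.neg_one_pow, zero_pow hn.pos.ne']

theorem hasPrimitiveSolution_of_modEq {l n : ℕ} {k : ℤ} {p a : ℕ} (hp : p.Prime)
    (hn : Odd n) (hpa : p ^ a ∣ n) (hl : 2 ≤ l) {x : Fin l → ℤ}
    (hx : (∑ t, x t ^ n) ≡ k [ZMOD (p : ℤ) ^ (a + 1)]) : HasPrimitiveSolution l n k p (a + 1) := by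
  by_cases hall : ∀ t, (p : ℤ) ∣ x t
  · have hna : a + 1 ≤ n :=
      (Nat.lt_pow_self hp.one_lt).trans_le (Nat.le_of_dvd hn.pos hpa)
    have hsum : (p : ℤ) ^ (a + 1) ∣ ∑ t, x t ^ n :=
      dvd_sum fun t _ ↦ (pow_dvd_pow_of_dvd (hall t) _).trans (pow_dvd_pow _ hna)
    obtain ⟨y, hy, t, ht⟩ := exists_sum_pow_eq_zero_of_odd hn hl
    refine ⟨y, ?_, t, by rw [ht]; exact_mod_cast hp.not_dvd_one⟩
    rw [hy]
    exact (Int.modEq_zero_iff_dvd.mpr hsum).symm.trans hx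
  · push Not at hall
    exact ⟨x, hx, hall⟩

theorem stmt_1_general (p n a l : ℕ) (k : ℤ) (hp : p.Prime) (hp2 : p ≠ 2)
    (hnodd : Odd n)
    (hpa : p ^ a ∣ n ∧ ¬ p ^ (a + 1) ∣ n) (hl : 2 ≤ l)
    (hsol : ∃ j, a + 1 ≤ j ∧ ∃ x : Fin l → ℤ,
      (∑ t, x t ^ n) ≡ k [ZMOD (p : ℤ) ^ j]) :
    ∀ i, 1 ≤ i → ∃ y : Fin l → ℤ, (∑ t, y t ^ n) ≡ k [ZMOD (p : ℤ) ^ i] := by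
  have hp3 : 3 ≤ p := hp.two_le.lt_of_ne' hp2
  obtain ⟨j, hj, x, hx⟩ := hsol
  have hbase : HasPrimitiveSolution l n k p (a + 1) :=
    hasPrimitiveSolution_of_modEq hp hnodd hpa.1 hl (hx.of_dvd (pow_dvd_pow _ hj))
  intro i hi
  obtain ⟨y, hy, -⟩ := hbase.of_le hp hp3 hpa.1 hpa.2 (j := a + i) (by omega)
  exact ⟨y, hy.of_dvd (pow_dvd_pow _ (by omega))⟩

/-- Odd prime `p`, odd `n ≥ 1`, `p^a || n`, `l ≥ 2`: a solution of the congruence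
mod `p^j` for some `j ≥ a+1` yields solutions mod `p^i` for all `i ≥ 1`. -/
theorem stmt_1 (p n a l : ℕ) (k : ℤ) (hp : p.Prime) (hp2 : p ≠ 2)
    (hn : 1 ≤ n) (hnodd : Odd n)
    (hpa : p ^ a ∣ n ∧ ¬ p ^ (a + 1) ∣ n) (hl : 2 ≤ l)
    (hsol : ∃ j, a + 1 ≤ j ∧ ∃ x : Fin l → ℤ,
      (∑ t, x t ^ n) ≡ k [ZMOD (p : ℤ) ^ j]) :
    ∀ i, 1 ≤ i → ∃ y : Fin l → ℤ, (∑ t, y t ^ n) ≡ k [ZMOD (p : ℤ) ^ i] :=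
  stmt_1_general p n a l k hp hp2 hnodd hpa hl hsol
end

section
/- Let p > 3 be a prime and l, n natural numbers with l ≥ 1. Set d = gcd(n, p−1) and suppose 1 < d < (p−1)/2, so that p = d·s + 1 for s = (p−1)/d. Then the set { x_1^n + ⋯ + x_l^n : x_1, …, x_l ∈ ℤ/pℤ } of sums of l n-th powers in ℤ/pℤ has cardinality at least min{ p, (2l−1)·s + 1 }. -/
/-!
The `n`-th powers in `ℤ/pℤ` form `A = {0} ∪ H` with `H` the subgroup of `(ℤ/pℤ)ˣ` of order `s`,
and the sums of `l` `n`-th powers form the sumset `l • A`. A set `T ⊇ A` that is stable under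
multiplication by `H` grows by at least `min(p - |T|, 2s)` when `A` is added to it. Indeed, by
Cauchy–Davenport `T + A` has at least `s` new elements; they form an `H`-stable set of nonzero
residues, i.e. a union of cosets of `H`, so if there are fewer than `2s` there are exactly `s`, and
likewise the complement of `T + A` has at least `s` elements. Then `(T, A)` is a critical pair, so
by Vosper's theorem `A` is an arithmetic progression. But `A` is invariant under multiplication by
every `h ∈ H`, and a progression of length between `2` and `p / 2` determines its common difference
up to sign, which forces `H ⊆ {±1}`, contradicting `s ≥ 3`.
-/

open Finset
open scoped Pointwise

namespace Finset

variable {G : Type*} [AddCommGroup G] [DecidableEq G] {r : G} {S : Finset G}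

/-- `S` is an arithmetic progression with common difference `r`: exactly one element of `S`
(its first term) is not of the form `r + x` with `x ∈ S`. -/
def IsAP (r : G) (S : Finset G) : Prop := #(S \ (r +ᵥ S)) = 1

theorem add_pair_zero_eq_union_vadd (X : Finset G) (r : G) : X + {0, r} = X ∪ (r +ᵥ X) := by
  ext x
  simp [mem_add, mem_vadd_finset, add_comm, and_or_left, exists_or]

theorem isAP_iff_card_union_vadd : IsAP r S ↔ #(S ∪ (r +ᵥ S)) = #S + 1 := by
  rw [IsAP, ← card_sdiff_add_card, card_vadd_finset]
  omega

theorem IsAP.ne_zero (h : IsAP r S) : r ≠ 0 := by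
  rintro rfl
  simp [IsAP] at h

theorem IsAP.nonempty (h : IsAP r S) : S.Nonempty := by
  rw [← card_pos]
  have := card_le_card (sdiff_subset (s := S) (t := r +ᵥ S))
  rw [IsAP] at h
  omega

theorem IsAP.vadd (h : IsAP r S) (c : G) : IsAP r (c +ᵥ S) := by
  rwa [IsAP, vadd_comm r c, ← vadd_finset_sdiff, card_vadd_finset]

end Finset

namespace ZMod

variable {p : ℕ} {r a : ZMod p} {S : Finset (ZMod p)}

theorem card_image_natCast_range {m : ℕ} (hm : m ≤ p) :
    #((range m).image (Nat.cast : ℕ → ZMod p)) = m := by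
  rw [card_image_of_injOn, card_range]
  intro i hi j hj hij
  have := congrArg ZMod.val hij
  rwa [ZMod.val_cast_of_lt ((mem_range.mp hi).trans_le hm),
    ZMod.val_cast_of_lt ((mem_range.mp hj).trans_le hm)] at this

section NeZero

variable [NeZero p]

theorem mem_image_natCast_range {m : ℕ} (hm : m ≤ p) {x : ZMod p} :
    x ∈ (range m).image (Nat.cast : ℕ → ZMod p) ↔ x.val < m := by
  constructor
  · intro h
    obtain ⟨i, hi, rfl⟩ := mem_image.mp h
    rw [ZMod.val_cast_of_lt ((mem_range.mp hi).trans_le hm)]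
    exact mem_range.mp hi
  · exact fun h => mem_image.mpr ⟨x.val, mem_range.mpr h, ZMod.natCast_zmod_val x⟩

theorem _root_.Finset.IsAP.eq_vadd_image_natCast (h : IsAP 1 S) :
    ∃ a : ZMod p, S = a +ᵥ (range #S).image (Nat.cast : ℕ → ZMod p) := by
  have hSp : #S ≤ p := by simpa using card_le_univ S
  obtain ⟨b, hb⟩ := card_eq_one.mp h
  have hbS : b ∈ S := (mem_sdiff.mp (hb ▸ mem_singleton_self b)).1
  have hpred : ∀ x ∈ S, x ≠ b → x - 1 ∈ S := by
    intro x hx hxb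
    by_contra hx1
    have : x ∈ S \ ((1 : ZMod p) +ᵥ S) := mem_sdiff.mpr ⟨hx, fun h' => hx1 (by
      obtain ⟨y, hy, rfl⟩ := mem_vadd_finset.mp h'
      simpa [vadd_eq_add] using hy)⟩
    rw [hb, mem_singleton] at this
    exact hxb this
  have hrun : ∀ x ∈ S, ∀ j ≤ (x - b).val, b + j ∈ S := by
    intro x hx j hj
    induction hk : (x - b).val - j generalizing j with
    | zero => rwa [show j = (x - b).val by omega, ZMod.natCast_zmod_val, add_sub_cancel]
    | succ k ih =>
      have hj1 := ih (j + 1) (by omega) (by omega)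
      have hne : b + ((j + 1 : ℕ) : ZMod p) ≠ b := by
        rw [Ne, add_eq_left, ← ZMod.val_eq_zero, ZMod.val_cast_of_lt (by
          have := ZMod.val_lt (x - b); omega)]
        omega
      simpa [← add_assoc] using hpred _ hj1 hne
  refine ⟨b, eq_of_subset_of_card_le (fun x hx => ?_) ?_⟩
  · have hsub : b +ᵥ (range ((x - b).val + 1)).image (Nat.cast : ℕ → ZMod p) ⊆ S := by
      intro y hy
      obtain ⟨_, hz, rfl⟩ := mem_vadd_finset.mp hy
      obtain ⟨j, hj, rfl⟩ := mem_image.mp hz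
      exact hrun x hx j (Nat.lt_succ_iff.mp (mem_range.mp hj))
    have := card_le_card hsub
    rw [card_vadd_finset, card_image_natCast_range (ZMod.val_lt _)] at this
    exact mem_vadd_finset.mpr ⟨x - b, (mem_image_natCast_range hSp).mpr (by omega),
      add_sub_cancel b x⟩
  · rw [card_vadd_finset, card_image_natCast_range hSp]

theorem eq_one_or_eq_neg_one_of_isAP_image_natCast_range {v : ZMod p} {m : ℕ}
    (h : IsAP v ((range m).image (Nat.cast : ℕ → ZMod p))) (hm : 2 ≤ m) (hp : 2 * m ≤ p) :
    v = 1 ∨ v = -1 := by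
  by_contra! hv
  have hvw : ((v.val : ℕ) : ZMod p) = v := ZMod.natCast_zmod_val v
  have hw0 : v.val ≠ 0 := (ZMod.val_ne_zero v).mpr h.ne_zero
  have hw1 : v.val ≠ 1 := fun h1 => hv.1 (by rw [← hvw, h1, Nat.cast_one])
  have hwp : v.val ≠ p - 1 := fun h1 => hv.2 (by
    rw [← hvw, h1, Nat.cast_sub NeZero.one_le, ZMod.natCast_self, Nat.cast_one,
      zero_sub])
  have hwlt := ZMod.val_lt v
  have hfirst : ∀ j < m, j < v.val → m ≤ j + p - v.val →
      (j : ZMod p) ∈ (range m).image Nat.cast \ (v +ᵥ (range m).image Nat.cast) := by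
    intro j hjm hjw hjp
    refine mem_sdiff.mpr ⟨mem_image_of_mem _ (mem_range.mpr hjm), fun hj => ?_⟩
    obtain ⟨y, hy, hyj⟩ := mem_vadd_finset.mp hj
    have hy' : y = ((j + (p - v.val) : ℕ) : ZMod p) := by
      rw [Nat.cast_add, Nat.cast_sub hwlt.le, ZMod.natCast_self, hvw, ← hyj, vadd_eq_add]
      ring
    rw [mem_image_natCast_range (by omega), hy', ZMod.val_cast_of_lt (by omega)] at hy
    omega
  obtain ⟨j₁, j₂, hj₁, hj₂, hj, h₁, h₂⟩ : ∃ j₁ j₂ : ℕ, j₁ < m ∧ j₂ < m ∧ j₁ ≠ j₂ ∧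
      (j₁ : ZMod p) ∈ (range m).image Nat.cast \ (v +ᵥ (range m).image Nat.cast) ∧
      (j₂ : ZMod p) ∈ (range m).image Nat.cast \ (v +ᵥ (range m).image Nat.cast) := by
    rcases lt_or_ge v.val m with hwm | hwm
    · exact ⟨0, 1, by omega, by omega, by omega, hfirst 0 (by omega) (by omega) (by omega),
        hfirst 1 (by omega) (by omega) (by omega)⟩
    · exact ⟨m - 1, m - 2, by omega, by omega, by omega, hfirst _ (by omega) (by omega) (by omega),
        hfirst _ (by omega) (by omega) (by omega)⟩
  have hne : (j₁ : ZMod p) ≠ j₂ := fun h' => hj (by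
    have := congrArg ZMod.val h'
    rwa [ZMod.val_cast_of_lt (by omega), ZMod.val_cast_of_lt (by omega)] at this)
  have := card_le_card (insert_subset h₁ (singleton_subset_iff.mpr h₂))
  rw [card_pair hne] at this
  rw [IsAP] at h
  omega

end NeZero

variable [Fact p.Prime]

theorem min_le_card_union_vadd (hS : S.Nonempty) (hr : r ≠ 0) :
    min p (#S + 1) ≤ #(S ∪ (r +ᵥ S)) := by
  have := ZMod.cauchy_davenport Fact.out hS (insert_nonempty 0 {r})
  rwa [add_pair_zero_eq_union_vadd, card_pair hr.symm, Nat.add_sub_assoc one_le_two] at this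

theorem eq_zero_of_vadd_finset_eq (hS : S.Nonempty) (hSp : #S < p) (h : r +ᵥ S = S) :
    r = 0 := by
  by_contra hr
  have := min_le_card_union_vadd hS hr
  rw [h, union_self] at this
  omega

theorem _root_.Finset.IsAP.smul (h : IsAP r S) (ha : a ≠ 0) : IsAP (a * r) (a • S) := by
  have : a • (r +ᵥ S) = (a * r) +ᵥ a • S := by
    ext x
    simp only [mem_smul_finset, mem_vadd_finset]
    constructor
    · rintro ⟨_, ⟨y, hy, rfl⟩, rfl⟩
      exact ⟨a • y, ⟨y, hy, rfl⟩, by simp [mul_add]⟩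
    · rintro ⟨_, ⟨y, hy, rfl⟩, rfl⟩
      exact ⟨r +ᵥ y, ⟨y, hy, rfl⟩, by simp [mul_add]⟩
  rwa [IsAP, ← this, ← smul_finset_sdiff₀ ha, card_smul_finset₀ ha]

theorem _root_.Finset.IsAP.union_vadd (h : IsAP r S) (hp : #S + 2 ≤ p) :
    IsAP r (S ∪ (r +ᵥ S)) := by
  have hZcard : #(S ∪ (r +ᵥ S)) = #S + 1 := isAP_iff_card_union_vadd.mp h
  have hsub : (S ∪ (r +ᵥ S)) \ (r +ᵥ (S ∪ (r +ᵥ S))) ⊆ S \ (r +ᵥ S) := by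
    intro x hx
    simp only [vadd_finset_union, mem_sdiff, mem_union] at hx ⊢
    tauto
  have hpos : 0 < #((S ∪ (r +ᵥ S)) \ (r +ᵥ (S ∪ (r +ᵥ S)))) := by
    rw [card_pos, nonempty_iff_ne_empty, Ne, sdiff_eq_empty_iff_subset]
    intro hsub'
    have := eq_of_subset_of_card_le hsub' (by rw [card_vadd_finset])
    exact h.ne_zero (eq_zero_of_vadd_finset_eq (h.nonempty.mono subset_union_left)
      (by omega) this.symm)
  have := card_le_card hsub
  rw [IsAP] at h ⊢
  omega

theorem vadd_erase_zero_eq_add_sdiff {X B : Finset (ZMod p)} {e : ZMod p} (he : e ∈ X)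
    (hB : 0 ∈ B) (hc : #(B ∩ (-e +ᵥ X)) ≤ 1) (hcrit : #(X + B) + 1 = #X + #B) :
    e +ᵥ B.erase 0 = (X + B) \ X := by
  have hinter : B ∩ (-e +ᵥ X) = {0} := by
    refine (eq_singleton_iff_unique_mem.mpr ⟨mem_inter.mpr ⟨hB, ?_⟩, fun b hb => ?_⟩)
    · exact mem_vadd_finset.mpr ⟨e, he, by simp⟩
    · exact card_le_one.mp hc b hb 0 (mem_inter.mpr ⟨hB, mem_vadd_finset.mpr ⟨e, he, by simp⟩⟩)
  have hXsub : X ⊆ X + B := fun x hx => mem_add.mpr ⟨x, hx, 0, hB, add_zero x⟩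
  refine eq_of_subset_of_card_le (fun y hy => ?_) ?_
  · obtain ⟨b, hb, rfl⟩ := mem_vadd_finset.mp hy
    obtain ⟨hb0, hbB⟩ := mem_erase.mp hb
    refine mem_sdiff.mpr ⟨mem_add.mpr ⟨e, he, b, hbB, rfl⟩, fun hbX => hb0 ?_⟩
    have : b ∈ B ∩ (-e +ᵥ X) := mem_inter.mpr ⟨hbB, mem_vadd_finset.mpr ⟨e +ᵥ b, hbX, by simp⟩⟩
    rwa [hinter, mem_singleton] at this
  · rw [card_sdiff_of_subset hXsub, card_vadd_finset, card_erase_of_mem hB]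
    omega

theorem exists_two_le_card_inter_vadd_lt {X B : Finset (ZMod p)} (hB : 0 ∈ B) (hB3 : 3 ≤ #B)
    (hX : 2 ≤ #X) (hcrit : #(X + B) + 1 = #X + #B) (hp : #(X + B) + 2 ≤ p) :
    ∃ e : ZMod p, 2 ≤ #(B ∩ (-e +ᵥ X)) ∧ #(B ∩ (-e +ᵥ X)) < #B := by
  -- Otherwise every `e ∈ X` has either `e + B ⊆ X` or `(e + B) ∩ X = {e}`. In the second case
  -- `e + (B \ {0})` is all of `(X + B) \ X`, which pins down `e`; Cauchy–Davenport for the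
  -- remaining `e` then contradicts `|X + B| > |X|`.
  by_contra! hbad
  set F := X.filter (fun e => e +ᵥ B ⊆ X)
  have hFX : F ⊆ X := filter_subset _ X
  have hsingle : ∀ e ∈ X \ F, e +ᵥ B.erase 0 = (X + B) \ X := by
    intro e he
    obtain ⟨heX, heF⟩ := mem_sdiff.mp he
    refine vadd_erase_zero_eq_add_sdiff heX hB (not_lt.mp fun h2 => heF ?_) hcrit
    have hBsub : B ⊆ -e +ᵥ X := by
      have := eq_of_subset_of_card_le (inter_subset_left (s₁ := B) (s₂ := -e +ᵥ X)) (hbad e h2)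
      rw [← this]
      exact inter_subset_right
    exact mem_filter.mpr ⟨heX, vadd_finset_subset_iff.mpr hBsub⟩
  have hB' : #(B.erase 0) + 1 = #B := card_erase_add_one hB
  have hXF : #(X \ F) ≤ 1 := by
    refine card_le_one.mpr fun e he e' he' => ?_
    have h := congrArg (-e' +ᵥ ·) ((hsingle e he).trans (hsingle e' he').symm)
    simp only [vadd_vadd, neg_add_cancel, zero_vadd] at h
    have hne : (B.erase 0).Nonempty := card_pos.mp (by omega)
    have := eq_zero_of_vadd_finset_eq hne (by omega) h
    rw [neg_add_eq_zero] at this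
    exact this.symm
  rw [card_sdiff_of_subset hFX] at hXF
  have hFB : F + B ⊆ X := by
    intro y hy
    obtain ⟨f, hf, b, hb, rfl⟩ := mem_add.mp hy
    exact (mem_filter.mp hf).2 (mem_vadd_finset.mpr ⟨b, hb, rfl⟩)
  have hXsub : X ⊆ X + B := fun x hx => mem_add.mpr ⟨x, hx, 0, hB, add_zero x⟩
  have hCD := ZMod.cauchy_davenport Fact.out (s := F) (card_pos.mp (by omega)) ⟨0, hB⟩
  have := card_le_card hFB
  have := card_le_card hXsub
  omega

theorem exists_isAP_add_of_card_add_eq {X B : Finset (ZMod p)} (hX : 2 ≤ #X) (hB : 2 ≤ #B)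
    (hcrit : #(X + B) + 1 = #X + #B) (hp : #(X + B) + 2 ≤ p) :
    ∃ r, IsAP r (X + B) := by
  induction hk : #B using Nat.strong_induction_on generalizing X B with
  | _ k ih =>
  subst hk
  obtain ⟨b, hb⟩ := card_pos.mp (by omega : 0 < #B)
  set B₀ := -b +ᵥ B
  have h0 : (0 : ZMod p) ∈ B₀ := mem_vadd_finset.mpr ⟨b, hb, neg_add_cancel b⟩
  have hXB : X + B = b +ᵥ (X + B₀) := by rw [add_vadd_comm, vadd_neg_vadd]
  have hB₀card : #B₀ = #B := card_vadd_finset _ _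
  rw [hXB] at hcrit hp ⊢
  rw [card_vadd_finset] at hcrit hp
  rw [← hB₀card] at hcrit hB ih
  suffices ∃ r, IsAP r (X + B₀) from this.imp fun r hr => hr.vadd b
  rcases hB.eq_or_lt with h2 | h3
  · obtain ⟨r, hr⟩ := card_eq_one.mp (by rw [card_erase_of_mem h0]; omega : #(B₀.erase 0) = 1)
    have hr0 : r ≠ 0 := (mem_erase.mp (hr ▸ mem_singleton_self r)).1
    rw [← insert_erase h0, hr, add_pair_zero_eq_union_vadd] at hcrit hp ⊢
    rw [card_pair hr0.symm] at hcrit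
    have hX : IsAP r X := isAP_iff_card_union_vadd.mpr (by omega)
    exact ⟨r, hX.union_vadd (by omega)⟩
  · -- The Dyson `e`-transform keeps `|X| + |B₀|` and shrinks `X + B₀`, so by Cauchy–Davenport
    -- it yields a critical pair with the same sumset and a smaller second summand.
    obtain ⟨e, he2, heB⟩ := exists_two_le_card_inter_vadd_lt h0 h3 hX hcrit hp
    have hsub := addDysonETransform.subset e (X, B₀)
    have hcard := addDysonETransform.card e (X, B₀)
    simp only [addDysonETransform_fst, addDysonETransform_snd] at hsub hcard
    have hCD := ZMod.cauchy_davenport Fact.out (s := X ∪ (e +ᵥ B₀)) (t := B₀ ∩ (-e +ᵥ X))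
      ((card_pos.mp (by omega)).mono subset_union_left) (card_pos.mp (by omega))
    have heq := eq_of_subset_of_card_le hsub (by omega)
    rw [← heq] at hcrit hp ⊢
    exact ih _ heB (le_trans hX (card_le_card subset_union_left)) he2 (by omega) hp rfl

theorem _root_.Finset.IsAP.of_add {X B : Finset (ZMod p)} (h : IsAP r (X + B)) (hX : X.Nonempty)
    (hB : B.Nonempty) (hcrit : #(X + B) + 1 = #X + #B) (hp : #(X + B) + 2 ≤ p) : IsAP r B := by
  have hunion : X + (B ∪ (r +ᵥ B)) = (X + B) ∪ (r +ᵥ (X + B)) := by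
    rw [add_union, add_vadd_comm]
  have hup := ZMod.cauchy_davenport Fact.out hX (hB.mono (subset_union_left (s₂ := r +ᵥ B)))
  rw [hunion, isAP_iff_card_union_vadd.mp h] at hup
  have hlow := min_le_card_union_vadd hB h.ne_zero
  have := card_le_card_add_left (t := B) hX
  exact isAP_iff_card_union_vadd.mpr (by omega)

theorem _root_.Finset.IsAP.eq_or_eq_neg {q : ZMod p} (hr : IsAP r S) (hq : IsAP q S) (hS : 2 ≤ #S)
    (hp : 2 * #S ≤ p) : q = r ∨ q = -r := by
  have hr0 := hr.ne_zero
  have h1 : IsAP 1 (r⁻¹ • S) := by simpa [hr0] using hr.smul (inv_ne_zero hr0)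
  obtain ⟨a, ha⟩ := h1.eq_vadd_image_natCast
  have hI := (hq.smul (inv_ne_zero hr0)).vadd (-a)
  rw [ha, neg_vadd_vadd, card_smul_finset₀ (inv_ne_zero hr0)] at hI
  rcases eq_one_or_eq_neg_one_of_isAP_image_natCast_range hI hS hp with h | h
  · left
    rwa [inv_mul_eq_one₀ hr0, eq_comm] at h
  · right
    rw [inv_mul_eq_iff_eq_mul₀ hr0] at h
    simpa using h

section Orbits

variable {H X : Finset (ZMod p)} {x c : ZMod p}

theorem smul_finset_subset_of_stable (hX : ∀ h ∈ H, h • X = X) (hx : x ∈ X) : x • H ⊆ X := by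
  intro y hy
  obtain ⟨h, hh, rfl⟩ := mem_smul_finset.mp hy
  rw [smul_eq_mul, mul_comm, ← smul_eq_mul, ← hX h hh]
  exact smul_mem_smul_finset hx

theorem card_le_card_of_stable (hX : ∀ h ∈ H, h • X = X) (hx : x ∈ X) (hx0 : x ≠ 0) :
    #H ≤ #X := by
  simpa [card_smul_finset₀ hx0] using card_le_card (smul_finset_subset_of_stable hX hx)

theorem card_eq_of_stable (hHmul : H * H ⊆ H) (hHinv : H⁻¹ ⊆ H) (hX : ∀ h ∈ H, h • X = X)
    (hX0 : 0 ∉ X) (hc : c ∈ X) (hlt : #X < 2 * #H) : #X = #H := by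
  have hc0 : c ≠ 0 := ne_of_mem_of_not_mem hc hX0
  have hcH := smul_finset_subset_of_stable hX hc
  suffices X ⊆ c • H by
    have := card_le_card this
    rw [card_smul_finset₀ hc0] at this
    have := card_le_card hcH
    rw [card_smul_finset₀ hc0] at this
    omega
  intro x hx
  by_contra hxc
  have hx0 : x ≠ 0 := ne_of_mem_of_not_mem hx hX0
  have hdisj : Disjoint (x • H) (c • H) := by
    refine disjoint_left.mpr fun y hy hy' => hxc ?_
    obtain ⟨h, hh, rfl⟩ := mem_smul_finset.mp hy
    obtain ⟨h', hh', hyc⟩ := mem_smul_finset.mp hy'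
    have hh0 : h ≠ 0 := by
      rintro rfl
      rw [← hX 0 hh, zero_smul_finset ⟨c, hc⟩] at hX0
      exact hX0 (mem_zero.mpr rfl)
    refine mem_smul_finset.mpr ⟨h' * h⁻¹, hHmul (mul_mem_mul hh' (hHinv (inv_mem_inv hh))), ?_⟩
    simp only [smul_eq_mul] at hyc ⊢
    rw [← mul_assoc, hyc, mul_inv_cancel_right₀ hh0]
  have := card_le_card (union_subset (smul_finset_subset_of_stable hX hx) hcH)
  rw [card_union_of_disjoint hdisj, card_smul_finset₀ hx0, card_smul_finset₀ hc0] at this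
  omega

end Orbits

section GrowthStep

variable {H T : Finset (ZMod p)}

theorem smul_insert_zero_eq (hHmul : H * H ⊆ H) {h : ZMod p} (hh : h ∈ H) (hh0 : h ≠ 0) :
    h • insert 0 H = insert 0 H := by
  refine eq_of_subset_of_card_le ?_ (card_smul_finset₀ hh0 _).ge
  rw [smul_finset_insert, smul_zero]
  exact insert_subset_insert 0 ((smul_finset_subset_mul hh).trans hHmul)

theorem not_isAP_insert_zero (hH0 : 0 ∉ H) (hHmul : H * H ⊆ H) (hH3 : 3 ≤ #H)
    (hp : 2 * #H + 2 ≤ p) : ¬ IsAP r (insert 0 H) := by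
  intro hA
  obtain ⟨h, hh, hh1, hh1'⟩ : ∃ h ∈ H, h ≠ 1 ∧ h ≠ -1 := by
    by_contra! hcon
    have hsub : H ⊆ {1, -1} := fun x hx => by
      by_cases hx1 : x = 1
      · simp [hx1]
      · simp [hcon x hx hx1]
    have := (card_le_card hsub).trans card_le_two
    omega
  have hh0 : h ≠ 0 := ne_of_mem_of_not_mem hh hH0
  have hhA := hA.smul hh0
  rw [smul_insert_zero_eq hHmul hh hh0] at hhA
  have hcard : #(insert 0 H) = #H + 1 := card_insert_of_notMem hH0
  rcases hA.eq_or_eq_neg hhA (by omega) (by omega) with h1 | h1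
  · exact hh1 (mul_right_cancel₀ hA.ne_zero (by rw [h1, one_mul]))
  · exact hh1' (mul_right_cancel₀ hA.ne_zero (by rw [h1, neg_one_mul]))

theorem card_add_insert_zero_eq (hH0 : 0 ∉ H) (hHmul : H * H ⊆ H) (hHinv : H⁻¹ ⊆ H)
    (hHT : insert 0 H ⊆ T) (hT : ∀ h ∈ H, h • T ⊆ T)
    (hlt : #(T + insert 0 H) < min p (#T + 2 * #H)) :
    #(T + insert 0 H) = #T + #H ∧ #(T + insert 0 H) + #H ≤ p := by
  have hA : #(insert 0 H) = #H + 1 := card_insert_of_notMem hH0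
  have hTA : T ⊆ T + insert 0 H := subset_add_left T (mem_insert_self 0 H)
  have h0T : (0 : ZMod p) ∈ T := hHT (mem_insert_self 0 H)
  have hstable : ∀ h ∈ H, h • (T + insert 0 H) = T + insert 0 H ∧ h • T = T := by
    intro h hh
    have hh0 : h ≠ 0 := ne_of_mem_of_not_mem hh hH0
    have hhT : h • T = T := eq_of_subset_of_card_le (hT h hh) (card_smul_finset₀ hh0 _).ge
    exact ⟨by rw [smul_add, hhT, smul_insert_zero_eq hHmul hh hh0], hhT⟩
  have hCD := ZMod.cauchy_davenport Fact.out ⟨0, h0T⟩ (insert_nonempty 0 H)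
  have hTcard := card_le_card hTA
  have hnewcard : #((T + insert 0 H) \ T) = #(T + insert 0 H) - #T := card_sdiff_of_subset hTA
  have houtcard : #(univ \ (T + insert 0 H)) = p - #(T + insert 0 H) := by
    rw [card_sdiff_of_subset (subset_univ _), card_univ, ZMod.card]
  obtain ⟨c, hc⟩ : ((T + insert 0 H) \ T).Nonempty := card_pos.mp (by omega)
  obtain ⟨w, hw⟩ : (univ \ (T + insert 0 H)).Nonempty := card_pos.mp (by omega)
  have hnew : #((T + insert 0 H) \ T) = #H := by
    refine card_eq_of_stable hHmul hHinv (fun h hh => ?_) (fun h0 => (mem_sdiff.mp h0).2 h0T)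
      hc (by omega)
    rw [smul_finset_sdiff₀ (ne_of_mem_of_not_mem hh hH0), (hstable h hh).1, (hstable h hh).2]
  have hout : #H ≤ #(univ \ (T + insert 0 H)) := by
    refine card_le_card_of_stable (fun h hh => ?_) hw ?_
    · rw [smul_finset_sdiff₀ (ne_of_mem_of_not_mem hh hH0), (hstable h hh).1,
        smul_finset_univ₀ (ne_of_mem_of_not_mem hh hH0)]
    · rintro rfl
      exact (mem_sdiff.mp hw).2 (hTA h0T)
  omega

theorem min_le_card_add_insert_zero (hH0 : 0 ∉ H) (hHmul : H * H ⊆ H) (hHinv : H⁻¹ ⊆ H)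
    (hH3 : 3 ≤ #H) (hHT : insert 0 H ⊆ T) (hT : ∀ h ∈ H, h • T ⊆ T) :
    min p (#T + 2 * #H) ≤ #(T + insert 0 H) := by
  by_contra! hlt
  obtain ⟨hcard, hp⟩ := card_add_insert_zero_eq hH0 hHmul hHinv hHT hT hlt
  have hA : #(insert 0 H) = #H + 1 := card_insert_of_notMem hH0
  have hTcard : #H + 1 ≤ #T := hA ▸ card_le_card hHT
  obtain ⟨r, hr⟩ := exists_isAP_add_of_card_add_eq (X := T) (B := insert 0 H)
    (by omega) (by omega) (by omega) (by omega)
  exact not_isAP_insert_zero hH0 hHmul hH3 (by omega)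
    (hr.of_add ⟨0, hHT (mem_insert_self 0 H)⟩ (insert_nonempty 0 H) (by omega) (by omega))

end GrowthStep

theorem min_le_card_nsmul_insert_zero {H : Finset (ZMod p)} (hH0 : 0 ∉ H) (hHmul : H * H ⊆ H)
    (hHinv : H⁻¹ ⊆ H) (hH3 : 3 ≤ #H) (l : ℕ) :
    min p ((2 * l + 1) * #H + 1) ≤ #((l + 1) • insert 0 H) := by
  have hstable : ∀ h ∈ H, ∀ k : ℕ, h • (k • insert (0 : ZMod p) H) ⊆ k • insert 0 H := by
    intro h hh k
    induction k with
    | zero => simp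
    | succ k ih =>
      rw [succ_nsmul, smul_add]
      exact add_subset_add ih (smul_insert_zero_eq hHmul hh (ne_of_mem_of_not_mem hh hH0)).le
  induction l with
  | zero => simp [card_insert_of_notMem hH0]
  | succ l ih =>
    have := min_le_card_add_insert_zero hH0 hHmul hHinv hH3
      (subset_nsmul (mem_insert_self 0 H) (by omega : l + 1 ≠ 0)) (fun h hh => hstable h hh (l + 1))
    rw [succ_nsmul _ (l + 1)]
    have hexp : (2 * (l + 1) + 1) * #H + 1 = (2 * l + 1) * #H + 1 + 2 * #H := by ring
    omega

end ZMod

section NthPowers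

variable {M K : Type*} [Monoid M] [Fintype M] [DecidableEq M] [Field K] [Fintype K]
  [DecidableEq K] {n : ℕ}

variable (M n) in
def nthPowers : Finset M := univ.image (· ^ n)

theorem mem_nthPowers {x : M} : x ∈ nthPowers M n ↔ ∃ y, y ^ n = x := by
  simp [nthPowers]

theorem zero_mem_nthPowers (hn : n ≠ 0) : (0 : K) ∈ nthPowers K n :=
  mem_nthPowers.mpr ⟨0, zero_pow hn⟩

theorem erase_zero_nthPowers_eq :
    (nthPowers K n).erase 0 = (nthPowers Kˣ n).image (↑) := by
  ext x
  simp only [mem_erase, mem_nthPowers, mem_image, exists_exists_eq_and, Units.val_pow_eq_pow_val]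
  constructor
  · rintro ⟨hx, y, rfl⟩
    rcases eq_or_ne y 0 with rfl | hy
    · obtain rfl : n = 0 := by_contra fun hn => hx (zero_pow hn)
      exact ⟨1, by simp⟩
    · exact ⟨Units.mk0 y hy, rfl⟩
  · rintro ⟨u, rfl⟩
    exact ⟨pow_ne_zero _ u.ne_zero, u, rfl⟩

theorem card_erase_zero_nthPowers :
    #((nthPowers K n).erase 0) = (Fintype.card K - 1) / (Fintype.card K - 1).gcd n := by
  rw [erase_zero_nthPowers_eq, card_image_of_injective _ Units.val_injective, ← Fintype.card_units,
    ← Nat.card_eq_fintype_card, ← IsCyclic.card_powMonoidHom_range, nthPowers,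
    ← Set.ncard_coe_finset, coe_image, coe_univ, Set.image_univ, ← Nat.card_coe_set_eq]
  rfl

theorem erase_zero_nthPowers_mul_subset :
    (nthPowers K n).erase 0 * (nthPowers K n).erase 0 ⊆ (nthPowers K n).erase 0 := by
  intro x hx
  obtain ⟨a, ha, b, hb, rfl⟩ := mem_mul.mp hx
  obtain ⟨ha0, ha⟩ := mem_erase.mp ha
  obtain ⟨hb0, hb⟩ := mem_erase.mp hb
  obtain ⟨y, rfl⟩ := mem_nthPowers.mp ha
  obtain ⟨z, rfl⟩ := mem_nthPowers.mp hb
  exact mem_erase.mpr ⟨mul_ne_zero ha0 hb0, mem_nthPowers.mpr ⟨y * z, mul_pow y z n⟩⟩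

theorem erase_zero_nthPowers_inv_subset :
    ((nthPowers K n).erase 0)⁻¹ ⊆ (nthPowers K n).erase 0 := by
  intro x hx
  obtain ⟨a, ha, rfl⟩ := mem_inv.mp hx
  obtain ⟨ha0, ha⟩ := mem_erase.mp ha
  obtain ⟨y, rfl⟩ := mem_nthPowers.mp ha
  exact mem_erase.mpr ⟨inv_ne_zero ha0, mem_nthPowers.mpr ⟨y⁻¹, inv_pow y n⟩⟩

theorem mem_nsmul_nthPowers {l : ℕ} {c : K} :
    c ∈ l • nthPowers K n ↔ ∃ x : Fin l → K, ∑ i, x i ^ n = c := by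
  rw [mem_nsmul]
  constructor
  · rintro ⟨f, rfl⟩
    choose x hx using fun i => mem_nthPowers.mp (f i).2
    exact ⟨x, by simp [List.sum_ofFn, hx]⟩
  · rintro ⟨x, rfl⟩
    exact ⟨fun i => ⟨x i ^ n, mem_nthPowers.mpr ⟨x i, rfl⟩⟩, by simp [List.sum_ofFn]⟩

end NthPowers

theorem stmt_7_general (p l n d s : ℕ) (hp : p.Prime)
    (hd : d = Nat.gcd n (p - 1)) (hd2 : d < (p - 1) / 2)
    (hs : s = (p - 1) / d) :
    min p ((2 * l - 1) * s + 1) ≤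
      Set.ncard {c : ZMod p | ∃ x : Fin l → ZMod p, ∑ i, x i ^ n = c} := by
  have := Fact.mk hp
  have hn : n ≠ 0 := by
    rintro rfl
    rw [Nat.gcd_zero_left] at hd
    have := Nat.div_le_self (p - 1) 2
    omega
  have hs3 : 3 ≤ s := by
    obtain ⟨k, hk⟩ : d ∣ p - 1 := hd ▸ Nat.gcd_dvd_right n (p - 1)
    have hd0 : 0 < d := Nat.pos_of_ne_zero (by rintro rfl; omega)
    have h2d : (d + 1) * 2 ≤ p - 1 := (Nat.le_div_iff_mul_le two_pos).mp hd2
    rw [hs, hk, Nat.mul_div_cancel_left k hd0]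
    nlinarith
  have hcard : #((nthPowers (ZMod p) n).erase 0) = s := by
    rw [card_erase_zero_nthPowers, ZMod.card, Nat.gcd_comm, hs, hd]
  have hset : {c : ZMod p | ∃ x : Fin l → ZMod p, ∑ i, x i ^ n = c} = ↑(l • nthPowers (ZMod p) n) :=
    Set.ext fun c => mem_nsmul_nthPowers.symm
  rw [hset, Set.ncard_coe_finset]
  rcases l with _ | l
  · simp
  · rw [show 2 * (l + 1) - 1 = 2 * l + 1 by omega]
    have := ZMod.min_le_card_nsmul_insert_zero (notMem_erase 0 _) erase_zero_nthPowers_mul_subset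
      erase_zero_nthPowers_inv_subset (hcard ▸ hs3) l
    rwa [insert_erase (zero_mem_nthPowers hn), hcard] at this

/-- For `p > 3` prime, `l ≥ 1`, `d = gcd(n, p-1)` with `1 < d < (p-1)/2` and
`s = (p-1)/d`, the range of sums of `l` `n`-th powers in `ℤ/pℤ` has cardinality
at least `min{p, (2l-1)s + 1}`. -/
theorem stmt_7 (p l n d s : ℕ) (hp : p.Prime) (hp3 : 3 < p) (hl : 1 ≤ l)
    (hd : d = Nat.gcd n (p - 1)) (hd1 : 1 < d) (hd2 : d < (p - 1) / 2)
    (hs : s = (p - 1) / d) :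
    min p ((2 * l - 1) * s + 1) ≤
      Set.ncard {c : ZMod p | ∃ x : Fin l → ZMod p, ∑ i, x i ^ n = c} :=
  stmt_7_general p l n d s hp hd hd2 hs
end

section
/- Let p be an odd prime, n ≥ 1 a natural number, and set d = gcd(n, p−1). Suppose d > 1 and write p = d·s + 1 with s = (p−1)/d, and assume s ≥ 2. Then every element of ℤ/pℤ is a sum of d n-th powers; that is, for every c ∈ ℤ/pℤ there exist x_1, …, x_d ∈ ℤ/pℤ with x_1^n + ⋯ + x_d^n = c. -/
/-!
The set `A` of `n`-th powers in `ZMod p` consists of `0` and the image of the `n`-th power map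
on the cyclic group of units, whose kernel has order `gcd(n, p - 1) = d`; hence `|A| = s + 1`.
Iterating the Cauchy–Davenport theorem gives
`|d • A| ≥ min(p, d (|A| - 1) + 1) = min(p, d s + 1) = p`, so `d • A` is all of `ZMod p`.
-/

open Finset Pointwise

namespace FiniteField

variable {K : Type*} [Field K] [Fintype K] [DecidableEq K]

lemma card_image_pow_units (n : ℕ) :
    #(univ.image fun u : Kˣ => (u : K) ^ n) =
      (Fintype.card K - 1) / (Fintype.card K - 1).gcd n := by
  have h := IsCyclic.card_powMonoidHom_range (G := Kˣ) n
  rw [Nat.card_eq_fintype_card (α := Kˣ), Fintype.card_units] at h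
  have hval : (univ.image fun u : Kˣ => (u : K) ^ n) =
      (univ.image (powMonoidHom n : Kˣ →* Kˣ)).image Units.val := by
    simp [image_image, Function.comp_def]
  rw [← h, hval, card_image_of_injective _ Units.val_injective, ← SetLike.coe_sort_coe,
    MonoidHom.coe_range, Nat.card_eq_card_toFinset, Set.toFinset_range]

lemma image_pow_eq_insert_zero {n : ℕ} (hn : n ≠ 0) :
    univ.image (fun x : K => x ^ n) = insert 0 (univ.image fun u : Kˣ => (u : K) ^ n) := by
  ext x
  simp only [mem_image, mem_univ, true_and, mem_insert]
  constructor
  · rintro ⟨y, rfl⟩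
    rcases eq_or_ne y 0 with rfl | hy
    · exact .inl (zero_pow hn)
    · exact .inr ⟨Units.mk0 y hy, rfl⟩
  · rintro (rfl | ⟨u, rfl⟩)
    · exact ⟨0, zero_pow hn⟩
    · exact ⟨u, rfl⟩

lemma card_image_pow {n : ℕ} (hn : n ≠ 0) :
    #(univ.image fun x : K => x ^ n) =
      (Fintype.card K - 1) / (Fintype.card K - 1).gcd n + 1 := by
  rw [image_pow_eq_insert_zero hn, card_insert_of_notMem, card_image_pow_units]
  simp only [mem_image, mem_univ, true_and, not_exists]
  exact fun u => pow_ne_zero n u.ne_zero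

end FiniteField

lemma ZMod.min_le_card_nsmul {p : ℕ} (hp : p.Prime) {A : Finset (ZMod p)} (hA : A.Nonempty)
    (k : ℕ) : min p (k * (#A - 1) + 1) ≤ #(k • A) := by
  induction k with
  | zero => simp
  | succ k ih =>
    have hcd := cauchy_davenport hp (hA.nsmul (n := k)) hA
    have hA1 : 1 ≤ #A := hA.card_pos
    rw [succ_nsmul, add_one_mul]
    omega

lemma mem_nsmul_image_pow_iff {R : Type*} [CommSemiring R] [Fintype R] [DecidableEq R]
    {n k : ℕ} {c : R} :
    c ∈ k • univ.image (· ^ n) ↔ ∃ x : Fin k → R, ∑ i, x i ^ n = c := by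
  rw [← mem_coe, coe_nsmul, Set.mem_nsmul_iff_sum]
  simp only [coe_image, coe_univ, Set.image_univ, Set.mem_range]
  constructor
  · rintro ⟨f, hf, rfl⟩
    choose x hx using hf
    exact ⟨x, by simp only [hx]⟩
  · rintro ⟨x, rfl⟩
    exact ⟨_, fun i => ⟨x i, rfl⟩, rfl⟩

theorem stmt_8_general (p n d s : ℕ) (hp : p.Prime) (hn : 1 ≤ n)
    (hd : d = Nat.gcd n (p - 1))
    (hpds : p = d * s + 1) :
    ∀ c : ZMod p, ∃ x : Fin d → ZMod p, ∑ i, x i ^ n = c := by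
  have : Fact p.Prime := ⟨hp⟩
  intro c
  set A := univ.image fun x : ZMod p => x ^ n
  have hd0 : 0 < d := hd ▸ Nat.gcd_pos_of_pos_left _ hn
  have hA : #A = s + 1 := by
    rw [FiniteField.card_image_pow (by omega), ZMod.card, Nat.gcd_comm, ← hd, hpds,
      Nat.add_sub_cancel, Nat.mul_div_cancel_left _ hd0]
  have hdA : d • A = univ := by
    refine eq_univ_of_card _ (le_antisymm (card_le_univ _) ?_)
    calc Fintype.card (ZMod p) = min p (d * (#A - 1) + 1) := by
          rw [ZMod.card, hA, Nat.add_sub_cancel]; omega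
      _ ≤ #(d • A) := ZMod.min_le_card_nsmul hp (univ_nonempty.image _) d
  exact mem_nsmul_image_pow_iff.1 (by rw [hdA]; exact mem_univ c)

/-- Odd prime `p`, `n ≥ 1`, `d = gcd(n, p-1) > 1`, `p = d·s + 1` with
`s = (p-1)/d ≥ 2`: every element of `ℤ/pℤ` is a sum of `d` `n`-th powers. -/
theorem stmt_8 (p n d s : ℕ) (hp : p.Prime) (hp2 : p ≠ 2) (hn : 1 ≤ n)
    (hd : d = Nat.gcd n (p - 1)) (hd1 : 1 < d) (hs : s = (p - 1) / d)
    (hpds : p = d * s + 1) (hs2 : 2 ≤ s) :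
    ∀ c : ZMod p, ∃ x : Fin d → ZMod p, ∑ i, x i ^ n = c :=
  stmt_8_general p n d s hp hn hd hpds
end

section
/- Let p be an odd prime, n ≥ 1 a natural number, and set d = gcd(n, p−1). Suppose d > 1 and p > 2d + 1. Then for h = ⌈(d+1)/2⌉, every element of ℤ/pℤ is a sum of h n-th powers; that is, for every c ∈ ℤ/pℤ there exist x_1, …, x_h ∈ ℤ/pℤ with x_1^n + ⋯ + x_h^n = c. -/
/-!
The `n`-th powers form `A = {0} ∪ K`, where `K` is the subgroup of `n`-th powers in `(ZMod p)ˣ`,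
of order `m = (p - 1) / d ≥ 3`. Every sumset `S = j • A` is stable under multiplication by `K`, so
`#S ≡ 1 (mod m)`, and the size of the complement of `S + A` is a multiple of `m`. Cauchy–Davenport
gives `#(S + A) ≥ #S + m`, and `#(S + A) - #S` is a multiple of `m`. If it were exactly `m`, then
`(S, A)` would be a critical pair, and Vosper's theorem would make `S + A` an arithmetic
progression. A `K`-stable set of size between `2` and `p - 2` is never one: its first and second
power sums vanish, while a progression of length `N` and difference `r` has "variance"
`r² N² (N² - 1) / 12 ≠ 0`. So every step adds at least `2 m` elements until `j • A = ZMod p`, which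
happens by `j = ⌈(d + 1) / 2⌉`.

Vosper's theorem is proved by induction on `#B`, using Dyson e-transforms. When no e-transform
makes `B` smaller, `B` is forced to be a Sidon set, and a Sidon set is too large to belong to a
critical pair.
-/

open Finset Pointwise

section AddCommGroup

variable {α : Type*} [AddCommGroup α] [DecidableEq α]

def arithProg (a r : α) (N : ℕ) : Finset α :=
  (range N).image fun i => a + i • r

def IsArithProg (s : Finset α) : Prop :=
  ∃ a r, r ≠ 0 ∧ s = arithProg a r #s

def IsSidon (B : Finset α) : Prop :=
  ∀ a ∈ B, ∀ b ∈ B, ∀ c ∈ B, ∀ d ∈ B, a + b = c + d → a = c ∨ a = d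

lemma mem_arithProg {a r x : α} {N : ℕ} : x ∈ arithProg a r N ↔ ∃ i < N, a + i • r = x := by
  simp [arithProg]

lemma vadd_arithProg (t a r : α) (N : ℕ) : t +ᵥ arithProg a r N = arithProg (t + a) r N := by
  simp only [arithProg, ← image_vadd, image_image]
  congr 1
  ext i
  simp [add_assoc]

lemma arithProg_union_vadd {a r : α} {N : ℕ} (hN : 1 ≤ N) :
    arithProg a r N ∪ (r +ᵥ arithProg a r N) = arithProg a r (N + 1) := by
  ext x
  simp only [mem_union, mem_arithProg, mem_vadd_finset, vadd_eq_add]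
  constructor
  · rintro (⟨i, hi, rfl⟩ | ⟨_, ⟨i, hi, rfl⟩, rfl⟩)
    · exact ⟨i, by omega, rfl⟩
    · exact ⟨i + 1, by omega, by rw [succ_nsmul]; abel⟩
  · rintro ⟨i, hi, rfl⟩
    rcases Nat.lt_or_ge i N with h | h
    · exact Or.inl ⟨i, h, rfl⟩
    · obtain ⟨j, rfl⟩ : ∃ j, i = j + 1 := ⟨i - 1, by omega⟩
      exact Or.inr ⟨_, ⟨j, by omega, rfl⟩, by rw [succ_nsmul]; abel⟩

lemma IsArithProg.vadd {s : Finset α} (hs : IsArithProg s) (t : α) : IsArithProg (t +ᵥ s) := by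
  obtain ⟨a, r, hr, hs⟩ := hs
  refine ⟨t + a, r, hr, ?_⟩
  rw [card_vadd_finset, ← vadd_arithProg, ← hs]

lemma IsSidon.two_mul_card_le_card_add_self {B : Finset α} (hS : IsSidon B) (hB : 2 < #B) :
    2 * #B ≤ #(B + B) := by
  obtain ⟨u, hu, v, hv, w, hw, huv, huw, hvw⟩ := two_lt_card.1 hB
  have hinter : (u +ᵥ B) ∩ (v +ᵥ B) ⊆ {v + u} := by
    intro x hx
    simp only [mem_inter, mem_vadd_finset, vadd_eq_add] at hx
    obtain ⟨⟨b, hb, rfl⟩, ⟨b', hb', hbb'⟩⟩ := hx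
    obtain h | rfl := hS u hu b hb v hv b' hb' hbb'.symm
    · exact absurd h huv
    · simp [← hbb']
  have hww : w + w ∉ (u +ᵥ B) ∪ (v +ᵥ B) := by
    simp only [mem_union, mem_vadd_finset, vadd_eq_add, not_or, not_exists, not_and]
    refine ⟨fun b hb h => ?_, fun b hb h => ?_⟩
    · obtain h' | rfl := hS w hw w hw u hu b hb h.symm
      · exact huw h'.symm
      · exact huw (add_right_cancel h)
    · obtain h' | rfl := hS w hw w hw v hv b hb h.symm
      · exact hvw h'.symm
      · exact hvw (add_right_cancel h)
  have hsub : insert (w + w) ((u +ᵥ B) ∪ (v +ᵥ B)) ⊆ B + B :=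
    insert_subset (add_mem_add hw hw)
      (union_subset (vadd_finset_subset_add hu) (vadd_finset_subset_add hv))
  have := card_le_card hsub
  rw [card_insert_of_notMem hww] at this
  have := card_union_add_card_inter (u +ᵥ B) (v +ᵥ B)
  have := card_le_card hinter
  simp only [card_vadd_finset, card_singleton] at *
  omega

end AddCommGroup

lemma Finset.twelve_mul_variance_range_add_nsmul {R : Type*} [CommRing R] (a r : R) (N : ℕ) :
    12 * (N * ∑ i ∈ range N, (a + i • r) ^ 2 - (∑ i ∈ range N, (a + i • r)) ^ 2) =
      r ^ 2 * N ^ 2 * (N - 1) * (N + 1) := by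
  have h1 : ∀ n : ℕ, 2 * ∑ i ∈ range n, (i : R) = n * (n - 1) := by
    intro n
    induction n with
    | zero => simp
    | succ n ih => rw [sum_range_succ, mul_add, ih]; push_cast; ring
  have h2 : ∀ n : ℕ, 6 * ∑ i ∈ range n, (i : R) ^ 2 = n * (n - 1) * (2 * n - 1) := by
    intro n
    induction n with
    | zero => simp
    | succ n ih => rw [sum_range_succ, mul_add, ih]; push_cast; ring
  have e1 : ∑ i ∈ range N, (a + i • r) = N * a + r * ∑ i ∈ range N, (i : R) := by
    simp [sum_add_distrib, nsmul_eq_mul, mul_sum, mul_comm]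
  have e2 : ∑ i ∈ range N, (a + i • r) ^ 2 =
      N * a ^ 2 + 2 * a * r * ∑ i ∈ range N, (i : R) + r ^ 2 * ∑ i ∈ range N, (i : R) ^ 2 := by
    simp only [nsmul_eq_mul, add_sq, sum_add_distrib, sum_const, card_range, mul_sum]
    congr 1; congr 1
    · exact sum_congr rfl fun i _ => by ring
    · exact sum_congr rfl fun i _ => by ring
  rw [e1, e2]
  linear_combination (2 * N * r ^ 2) * h2 N -
    (3 * r ^ 2 * (2 * ∑ i ∈ range N, (i : R) + N * (N - 1))) * h1 N

lemma ZMod.natCast_ne_zero_of_pos_of_lt {p x : ℕ} (hx : 0 < x) (hxp : x < p) :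
    (x : ZMod p) ≠ 0 := by
  rw [Ne, ZMod.natCast_eq_zero_iff]
  exact Nat.not_dvd_of_pos_of_lt hx hxp

namespace ZMod

variable {p : ℕ} [Fact p.Prime]

lemma card_add_card_sub_one_le_card_add {s t : Finset (ZMod p)} (hs : s.Nonempty)
    (ht : t.Nonempty) (h : #(s + t) < p) : #s + #t - 1 ≤ #(s + t) :=
  (min_le_iff.1 (ZMod.cauchy_davenport Fact.out hs ht)).resolve_left (by omega)

lemma injOn_add_nsmul (a : ZMod p) {r : ZMod p} (hr : r ≠ 0) {N : ℕ} (hN : N ≤ p) :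
    Set.InjOn (fun i : ℕ => a + i • r) (range N) := by
  intro i hi j hj hij
  simp only [coe_range, Set.mem_Iio, add_right_inj, nsmul_eq_mul] at hi hj hij
  have := (ZMod.natCast_eq_natCast_iff' i j p).1 (mul_right_cancel₀ hr hij)
  rwa [Nat.mod_eq_of_lt (by omega), Nat.mod_eq_of_lt (by omega)] at this

lemma card_arithProg (a : ZMod p) {r : ZMod p} (hr : r ≠ 0) {N : ℕ} (hN : N ≤ p) :
    #(arithProg a r N) = N := by
  rw [arithProg, card_image_of_injOn (injOn_add_nsmul a hr hN), card_range]

lemma eq_univ_of_forall_add_nsmul_mem {s : Finset (ZMod p)} {a r : ZMod p} (hr : r ≠ 0)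
    (h : ∀ i : ℕ, a + i • r ∈ s) : s = univ := by
  refine eq_univ_of_forall fun x => ?_
  simpa [nsmul_eq_mul, hr] using h ((x - a) * r⁻¹).val

lemma eq_univ_of_vadd_subset {s : Finset (ZMod p)} {t : ZMod p} (ht : t ≠ 0) (hs : s.Nonempty)
    (hts : t +ᵥ s ⊆ s) : s = univ := by
  obtain ⟨a, ha⟩ := hs
  refine eq_univ_of_forall_add_nsmul_mem (a := a) ht fun i => ?_
  induction i with
  | zero => simpa using ha
  | succ i ih =>
    rw [succ_nsmul, ← add_assoc, add_comm _ t, ← vadd_eq_add]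
    exact hts (vadd_mem_vadd_finset ih)

lemma exists_eq_add_nsmul_of_ne_univ {Y : Finset (ZMod p)} (hY : Y ≠ univ) {r : ZMod p}
    (hr : r ≠ 0) {y : ZMod p} (hy : y ∈ Y) :
    ∃ b, ∃ t : ℕ, y = b + t • r ∧ (∀ s ≤ t, b + s • r ∈ Y) ∧ b - r ∉ Y := by
  have hex : ∃ t : ℕ, y - (t + 1) • r ∉ Y := by
    by_contra! hall
    refine hY (eq_univ_of_forall_add_nsmul_mem (a := y) (neg_ne_zero.2 hr) fun i => ?_)
    cases i with
    | zero => simpa using hy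
    | succ i => simpa [sub_eq_add_neg] using hall i
  refine ⟨y - Nat.find hex • r, Nat.find hex, by abel, fun s hs => ?_, ?_⟩
  · obtain ⟨u, hu⟩ := Nat.exists_eq_add_of_le hs
    cases u with
    | zero => rwa [hu, add_zero, sub_add_cancel]
    | succ u =>
      convert not_not.1 (Nat.find_min hex (show u < Nat.find hex by omega)) using 1
      rw [hu, add_nsmul, add_nsmul]
      abel
  · convert Nat.find_spec hex using 2
    rw [succ_nsmul]
    abel

theorem exists_eq_arithProg_of_card_union_vadd_le {Y : Finset (ZMod p)} {r : ZMod p} (hr : r ≠ 0)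
    (hY : Y.Nonempty) (hYp : #Y < p) (h : #(Y ∪ (r +ᵥ Y)) ≤ #Y + 1) :
    ∃ a, Y = arithProg a r #Y := by
  have hYu : Y ≠ univ := by rintro rfl; simp [ZMod.card] at hYp
  have hstart : ∀ a ∈ Y, a - r ∉ Y → ∀ b ∈ Y, b - r ∉ Y → a = b := by
    have hnot : ∀ c, c - r ∉ Y → c ∉ r +ᵥ Y := by
      intro c hc hmem
      obtain ⟨y, hy, rfl⟩ := mem_vadd_finset.1 hmem
      simp_all
    have := card_sdiff_add_card Y (r +ᵥ Y)
    rw [card_vadd_finset] at this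
    exact fun a ha har b hb hbr => card_le_one.1 (by omega) a (mem_sdiff.2 ⟨ha, hnot a har⟩) b
      (mem_sdiff.2 ⟨hb, hnot b hbr⟩)
  obtain ⟨y₀, hy₀⟩ := hY
  obtain ⟨a, t₀, -, hta, har⟩ := exists_eq_add_nsmul_of_ne_univ hYu hr hy₀
  have ha : a ∈ Y := by simpa using hta 0 (Nat.zero_le _)
  have hprog : ∀ i < #Y, a + i • r ∈ Y := by
    by_contra! ⟨i, hi, hai⟩
    have hsub : Y ⊆ arithProg a r i := by
      intro y hy
      obtain ⟨b, t, rfl, htb, hbr⟩ := exists_eq_add_nsmul_of_ne_univ hYu hr hy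
      obtain rfl := hstart b (by simpa using htb 0 (Nat.zero_le _)) hbr a ha har
      exact mem_arithProg.2 ⟨t, by_contra fun hti => hai (htb i (by omega)), rfl⟩
    have := (card_le_card hsub).trans (card_image_le.trans (card_range i).le)
    omega
  refine ⟨a, (eq_of_subset_of_card_le (fun x hx => ?_) (card_arithProg a hr hYp.le).ge).symm⟩
  obtain ⟨i, hi, rfl⟩ := mem_arithProg.1 hx
  exact hprog i hi

lemma isArithProg_add_of_card_eq_two {X B : Finset (ZMod p)} (hX : X.Nonempty) (hB : #B = 2)
    (hcrit : #(X + B) = #X + 1) (hp : #(X + B) < p) : IsArithProg (X + B) := by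
  obtain ⟨b₁, b₂, hb, rfl⟩ := card_eq_two.1 hB
  set r := b₂ - b₁
  have hr : r ≠ 0 := sub_ne_zero.2 hb.symm
  have hXB : X + {b₁, b₂} = (b₁ +ᵥ X) ∪ (r +ᵥ (b₁ +ᵥ X)) := by
    rw [vadd_vadd, sub_add_cancel, add_comm, insert_eq, union_add, singleton_add, singleton_add]
  rw [hXB] at hcrit hp ⊢
  have hY : #(b₁ +ᵥ X) < p := by rw [card_vadd_finset]; omega
  obtain ⟨a, ha⟩ := exists_eq_arithProg_of_card_union_vadd_le hr hX.vadd_finset hY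
    (by rw [hcrit, card_vadd_finset])
  rw [card_vadd_finset] at ha
  refine ⟨a, r, hr, ?_⟩
  rw [hcrit, ha, arithProg_union_vadd (card_pos.2 hX)]

lemma card_le_card_filter_vadd_subset_add_one {X B : Finset (ZMod p)}
    (hF : ∀ e : ZMod p, ∀ b₁ ∈ B, ∀ b₂ ∈ B, b₁ ≠ b₂ → e + b₁ ∈ X → e + b₂ ∈ X → e +ᵥ B ⊆ X)
    (h0 : 0 ∈ B) (hB : 2 ≤ #B)
    (hcrit : #(X + B) = #X + #B - 1) (hp : #(X + B) < p) :
    #X ≤ #(univ.filter fun e : ZMod p => e +ᵥ B ⊆ X) + 1 := by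
  set F := univ.filter fun e : ZMod p => e +ᵥ B ⊆ X
  have hXB : X ⊆ X + B := fun x hx => by simpa using add_mem_add hx h0
  have hXF : #(X \ F) ≤ 1 := by
    obtain hXF | hXF := (X \ F).eq_empty_or_nonempty
    · simp [hXF]
    have hsub : X \ F + B.erase 0 ⊆ (X + B) \ X := by
      intro z hz
      obtain ⟨x, hx, b, hb, rfl⟩ := mem_add.1 hz
      rw [mem_sdiff] at hx ⊢
      rw [mem_erase] at hb
      refine ⟨add_mem_add hx.1 hb.2, fun hxb => hx.2 ?_⟩
      simpa [F] using hF x 0 h0 b hb.2 (Ne.symm hb.1) (by simpa using hx.1) hxb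
    have hE : #((X + B) \ X) = #B - 1 := by rw [card_sdiff_of_subset hXB]; omega
    have hB0 : (B.erase 0).Nonempty := card_pos.1 (by rw [card_erase_of_mem h0]; omega)
    have := card_add_card_sub_one_le_card_add hXF hB0
      ((card_le_card hsub).trans_lt (by rw [hE]; omega))
    have := card_le_card hsub
    rw [card_erase_of_mem h0] at *
    omega
  have := card_le_card_sdiff_add_card (s := X) (t := F)
  omega

/-- A nontrivial coincidence `a + b = c + d` in `B` would make the set of translates of `B` inside
`X` invariant under translation by `a - c`. -/
lemma isSidon_of_filter_vadd_subset_nonempty {X B : Finset (ZMod p)}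
    (hF : ∀ e : ZMod p, ∀ b₁ ∈ B, ∀ b₂ ∈ B, b₁ ≠ b₂ → e + b₁ ∈ X → e + b₂ ∈ X → e +ᵥ B ⊆ X)
    (hX : X ≠ univ)
    (hne : (univ.filter fun e : ZMod p => e +ᵥ B ⊆ X).Nonempty) : IsSidon B := by
  set F := univ.filter fun e : ZMod p => e +ᵥ B ⊆ X
  have memF : ∀ e, e ∈ F ↔ ∀ b ∈ B, e + b ∈ X := by
    simp [F, subset_iff, mem_vadd_finset]
  intro a ha b hb c hc d hd habcd
  by_contra! hne'
  have hcb : c ≠ b := by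
    rintro rfl
    exact hne'.2 (add_right_cancel (habcd.trans (add_comm _ _)))
  have hFu : F = univ := by
    refine eq_univ_of_vadd_subset (sub_ne_zero.2 hne'.1) hne fun e he => ?_
    obtain ⟨f, hf, rfl⟩ := mem_vadd_finset.1 he
    refine mem_filter.2 ⟨mem_univ _, hF _ c hc b hb hcb ?_ ?_⟩ <;> simp only [vadd_eq_add]
    · convert (memF f).1 hf a ha using 1
      abel
    · convert (memF f).1 hf d hd using 1
      linear_combination habcd
  refine hX (eq_univ_of_forall fun x => ?_)
  simpa using (memF (x - a)).1 (hFu ▸ mem_univ _) a ha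

lemma card_le_two_of_vadd_subset_of_two_mem {X B : Finset (ZMod p)}
    (hF : ∀ e : ZMod p, ∀ b₁ ∈ B, ∀ b₂ ∈ B, b₁ ≠ b₂ → e + b₁ ∈ X → e + b₂ ∈ X → e +ᵥ B ⊆ X)
    (h0 : 0 ∈ B) (hX : 2 ≤ #X)
    (hcrit : #(X + B) = #X + #B - 1) (hp : #(X + B) < p) : #B ≤ 2 := by
  by_contra! hB
  set F := univ.filter fun e : ZMod p => e +ᵥ B ⊆ X
  have hF1 : #X ≤ #F + 1 := card_le_card_filter_vadd_subset_add_one hF h0 hB.le hcrit hp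
  have hFne : F.Nonempty := card_pos.1 (by omega)
  have hXu : X ≠ univ := by
    rintro rfl
    simp [univ_add_of_zero_mem h0, ZMod.card] at hp
  have h2B := (isSidon_of_filter_vadd_subset_nonempty hF hXu hFne).two_mul_card_le_card_add_self hB
  have hBBF : B + B + F ⊆ X + B := by
    rw [add_right_comm]
    refine add_subset_add_right fun z hz => ?_
    obtain ⟨b, hb, e, he, rfl⟩ := mem_add.1 hz
    rw [add_comm]
    exact (mem_filter.1 he).2 (vadd_mem_vadd_finset hb)
  have := card_add_card_sub_one_le_card_add (card_pos.1 (by omega)) hFne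
    ((card_le_card hBBF).trans_lt hp)
  have := card_le_card hBBF
  omega

theorem vosper {X B : Finset (ZMod p)} (hX : 2 ≤ #X) (hB : 2 ≤ #B)
    (hcrit : #(X + B) = #X + #B - 1) (hp : #(X + B) < p) : IsArithProg (X + B) := by
  induction hk : #B using Nat.strong_induction_on generalizing X B with
  | _ k ih =>
  subst hk
  obtain hB2 | hB3 := hB.eq_or_lt
  · exact isArithProg_add_of_card_eq_two (card_pos.1 (by omega)) hB2.symm (by omega) hp
  obtain ⟨b₀, hb₀⟩ := card_pos.1 (by omega : 0 < #B)
  set B' := -b₀ +ᵥ B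
  have hXB' : X + B' = -b₀ +ᵥ (X + B) := add_vadd_comm _ _ _
  suffices IsArithProg (X + B') by simpa [hXB'] using this.vadd b₀
  have h0 : 0 ∈ B' := by simpa using vadd_mem_vadd_finset (a := -b₀) hb₀
  have hB' : #B' = #B := card_vadd_finset _ _
  have hcrit' : #(X + B') = #X + #B' - 1 := by rw [hXB', card_vadd_finset, hcrit, hB']
  have hp' : #(X + B') < p := by rwa [hXB', card_vadd_finset]
  by_cases htrans : ∃ e : ZMod p, 2 ≤ #(B' ∩ (-e +ᵥ X)) ∧ #(B' ∩ (-e +ᵥ X)) < #B'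
  · obtain ⟨e, he2, helt⟩ := htrans
    have hsub := addDysonETransform.subset e (X, B')
    have hcard := addDysonETransform.card e (X, B')
    simp only [addDysonETransform_fst, addDysonETransform_snd] at hsub hcard
    have hX' : X ⊆ X ∪ (e +ᵥ B') := subset_union_left
    have hcd := card_add_card_sub_one_le_card_add (card_pos.1 (by
      have := card_le_card hX'; omega)) (card_pos.1 (by omega)) ((card_le_card hsub).trans_lt hp')
    have heq := eq_of_subset_of_card_le hsub (by omega)
    rw [← heq] at hcrit' hp' ⊢
    exact ih _ (hB' ▸ helt) ((card_le_card hX').trans' hX) he2 (by omega) hp' rfl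
  · push Not at htrans
    refine absurd (card_le_two_of_vadd_subset_of_two_mem
      (fun e b₁ hb₁ b₂ hb₂ hb he₁ he₂ => ?_) h0 hX hcrit' hp') (by omega)
    have h2 : 2 ≤ #(B' ∩ (-e +ᵥ X)) := one_lt_card.2 ⟨b₁, by simp [hb₁, mem_neg_vadd_finset_iff,
      he₁], b₂, by simp [hb₂, mem_neg_vadd_finset_iff, he₂], hb⟩
    have := inter_eq_left.1 (eq_of_subset_of_card_le inter_subset_left (htrans e h2))
    rwa [subset_vadd_finset_iff, neg_neg] at this

end ZMod

lemma Subgroup.card_dvd_card_of_mul_mem {G : Type*} [Group G] (K : Subgroup G) (U : Set G)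
    (hU : ∀ u ∈ U, ∀ k ∈ K, u * k ∈ U) : Nat.card K ∣ Nat.card U := by
  have hU' : U = QuotientGroup.mk ⁻¹' (QuotientGroup.mk '' U : Set (G ⧸ K)) := by
    refine (Set.subset_preimage_image _ _).antisymm fun x ⟨u, hu, hux⟩ => ?_
    simpa using hU u hu _ (QuotientGroup.eq.1 hux)
  rw [hU', QuotientGroup.card_preimage_mk]
  exact dvd_mul_right _ _

lemma Subgroup.exists_sq_ne_one {F : Type*} [Field F] [Finite F] {K : Subgroup Fˣ}
    (hK : 2 < Nat.card K) : ∃ ζ ∈ K, ζ ^ 2 ≠ 1 := by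
  by_contra! h
  have := (Subgroup.card_le_of_le fun ζ hζ => (mem_rootsOfUnity 2 ζ).2 (h ζ hζ)).trans
    (card_rootsOfUnity F 2)
  omega

section Field

variable {F : Type*} [Field F] [DecidableEq F] {K : Subgroup Fˣ}

lemma card_dvd_card_erase_zero {T : Finset F} (hT : K ≤ MulAction.stabilizer Fˣ T) :
    Nat.card K ∣ #(T.erase 0) := by
  have := K.card_dvd_card_of_mul_mem {u : Fˣ | (u : F) ∈ T} fun u hu k hk => by
    simpa [mul_comm, Units.smul_def] using MulAction.mem_stabilizer_finset'.1 (hT hk) hu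
  convert this using 1
  have himg : Units.val '' {u : Fˣ | (u : F) ∈ T} = ↑(T.erase 0) := by
    ext x
    simp only [Set.mem_image, Set.mem_ofPred_eq, coe_erase, Set.mem_sdiff, mem_coe,
      Set.mem_singleton_iff]
    exact ⟨fun ⟨u, hu, hux⟩ => hux ▸ ⟨hu, u.ne_zero⟩, fun ⟨hx, hx0⟩ => ⟨.mk0 x hx0, hx, rfl⟩⟩
  rw [← Nat.card_image_of_injective Units.val_injective, himg, Nat.card_coe_set_eq,
    Set.ncard_coe_finset]

lemma le_stabilizer_add {S T : Finset F} (hS : K ≤ MulAction.stabilizer Fˣ S)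
    (hT : K ≤ MulAction.stabilizer Fˣ T) : K ≤ MulAction.stabilizer Fˣ (S + T) := fun k hk => by
  rw [MulAction.mem_stabilizer_iff, smul_add, MulAction.mem_stabilizer_iff.1 (hS hk),
    MulAction.mem_stabilizer_iff.1 (hT hk)]

lemma le_stabilizer_nsmul {A : Finset F} (hA : K ≤ MulAction.stabilizer Fˣ A) (j : ℕ) :
    K ≤ MulAction.stabilizer Fˣ (j • A) := by
  induction j with
  | zero => exact fun k _ => by simp [MulAction.mem_stabilizer_iff]
  | succ j ih => rw [succ_nsmul]; exact le_stabilizer_add ih hA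

lemma le_stabilizer_univ_sdiff [Fintype F] {T : Finset F} (hT : K ≤ MulAction.stabilizer Fˣ T) :
    K ≤ MulAction.stabilizer Fˣ (univ \ T) := fun k hk => by
  rw [MulAction.mem_stabilizer_iff, smul_finset_sdiff, smul_finset_univ,
    MulAction.mem_stabilizer_iff.1 (hT hk)]

lemma sum_pow_eq_zero_of_smul_eq {T : Finset F} {ζ : Fˣ} (hT : ζ • T = T) {j : ℕ}
    (hj : ζ ^ j ≠ 1) : ∑ t ∈ T, t ^ j = 0 := by
  have h : ∑ t ∈ T, t ^ j = (ζ : F) ^ j * ∑ t ∈ T, t ^ j := by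
    conv_lhs => rw [← hT, ← image_smul, sum_image (MulAction.injective ζ).injOn]
    simp [Units.smul_def, mul_pow, mul_sum]
  have hj' : (ζ : F) ^ j - 1 ≠ 0 := by
    rw [sub_ne_zero, ← Units.val_pow_eq_pow_val, Ne, Units.val_eq_one]
    exact hj
  exact (mul_eq_zero.1 (by linear_combination -h : ((ζ : F) ^ j - 1) * _ = 0)).resolve_left hj'

variable [Fintype F] {n : ℕ}

lemma le_stabilizer_image_pow :
    (powMonoidHom n : Fˣ →* Fˣ).range ≤
      MulAction.stabilizer Fˣ (univ.image fun x : F => x ^ n) := by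
  rintro _ ⟨u, rfl⟩
  refine MulAction.mem_stabilizer_finset'.2 fun b hb => ?_
  obtain ⟨x, -, rfl⟩ := mem_image.1 hb
  exact mem_image.2 ⟨u * x, mem_univ _, by simp [Units.smul_def, mul_pow]⟩

lemma card_image_pow (hn : n ≠ 0) :
    #(univ.image fun x : F => x ^ n) = Nat.card (powMonoidHom n : Fˣ →* Fˣ).range + 1 := by
  have : univ.image (fun x : F => x ^ n) =
      insert 0 ((univ.image fun u : Fˣ => u ^ n).map ⟨Units.val, Units.val_injective⟩) := by
    ext y
    simp only [mem_image, mem_univ, true_and, mem_insert, mem_map, Function.Embedding.coeFn_mk]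
    constructor
    · rintro ⟨x, rfl⟩
      obtain rfl | hx := eq_or_ne x 0
      · exact Or.inl (zero_pow hn)
      · exact Or.inr ⟨_, ⟨Units.mk0 x hx, rfl⟩, by simp⟩
    · rintro (rfl | ⟨_, ⟨u, rfl⟩, rfl⟩)
      · exact ⟨0, zero_pow hn⟩
      · exact ⟨u, by simp⟩
  rw [this, card_insert_of_notMem (by simp), card_map, ← Set.toFinset_range,
    ← Set.ncard_eq_toFinset_card', ← Nat.card_coe_set_eq]
  rfl

end Field

lemma exists_sum_eq_of_mem_nsmul_image {α M : Type*} [Fintype α] [AddCommMonoid M]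
    [DecidableEq M] (f : α → M) {h : ℕ} {c : M} (hc : c ∈ h • univ.image f) :
    ∃ x : Fin h → α, ∑ i, f (x i) = c := by
  obtain ⟨g, rfl⟩ := mem_nsmul.1 hc
  choose x hx using fun i => mem_image.1 (g i).2
  exact ⟨x, by simp [List.sum_ofFn, fun i => (hx i).2]⟩

namespace ZMod

variable {p : ℕ} [Fact p.Prime]

lemma not_isArithProg_of_smul_eq {T : Finset (ZMod p)} {ζ : (ZMod p)ˣ} (hζ : ζ ^ 2 ≠ 1)
    (hT : ζ • T = T) (hT2 : 2 ≤ #T) (hTp : #T + 2 ≤ p) : ¬ IsArithProg T := by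
  rintro ⟨a, r, hr, hTa⟩
  have hζ1 : ζ ^ 1 ≠ 1 := fun h => hζ (by rw [pow_one] at h; rw [h, one_pow])
  have hsum : ∀ f : ZMod p → ZMod p, ∑ i ∈ range #T, f (a + i • r) = ∑ t ∈ T, f t := by
    intro f
    conv_rhs => rw [hTa]
    exact (sum_image (injOn_add_nsmul a hr (by omega))).symm
  have hs1 : ∑ i ∈ range #T, (a + i • r) = 0 :=
    (hsum fun t => t).trans (by simpa using sum_pow_eq_zero_of_smul_eq hT hζ1)
  have hs2 : ∑ i ∈ range #T, (a + i • r) ^ 2 = 0 :=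
    (hsum fun t => t ^ 2).trans (sum_pow_eq_zero_of_smul_eq hT hζ)
  have hvar := twelve_mul_variance_range_add_nsmul a r #T
  rw [hs1, hs2, ← Nat.cast_pred (by omega), ← Nat.cast_succ] at hvar
  have hne : r ^ 2 * (#T : ZMod p) ^ 2 * ((#T - 1 : ℕ) : ZMod p) * ((#T + 1 : ℕ) : ZMod p) ≠ 0 := by
    apply_rules [mul_ne_zero, pow_ne_zero, natCast_ne_zero_of_pos_of_lt] <;> omega
  exact hne (by rw [← hvar]; ring)

lemma add_two_mul_card_le_card_add {K : Subgroup (ZMod p)ˣ} (hK : 2 < Nat.card K)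
    {S A : Finset (ZMod p)} (hS : K ≤ MulAction.stabilizer (ZMod p)ˣ S)
    (hA : K ≤ MulAction.stabilizer (ZMod p)ˣ A) (hS0 : 0 ∈ S) (hA0 : 0 ∈ A)
    (hAcard : #A = Nat.card K + 1) (hS2 : 2 ≤ #S) (hSA : S + A ≠ univ) :
    #S + 2 * Nat.card K ≤ #(S + A) := by
  have hSAK := le_stabilizer_add hS hA
  have hSA0 : 0 ∈ S + A := by simpa using add_mem_add hS0 hA0
  have hlt : #(S + A) < p := by simpa using card_lt_card (ssubset_univ_iff.2 hSA)
  have hcd := card_add_card_sub_one_le_card_add ⟨0, hS0⟩ ⟨0, hA0⟩ hlt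
  obtain ⟨u, hu⟩ := card_dvd_card_erase_zero hS
  obtain ⟨v, hv⟩ := card_dvd_card_erase_zero hSAK
  obtain ⟨w, hw⟩ := card_dvd_card_erase_zero (le_stabilizer_univ_sdiff hSAK)
  rw [card_erase_of_mem hS0] at hu
  rw [card_erase_of_mem hSA0] at hv
  rw [erase_eq_of_notMem (by simp [hSA0]), card_sdiff_of_subset (subset_univ _), card_univ,
    ZMod.card] at hw
  have hfar : #(S + A) + 2 ≤ p := by
    have : w ≠ 0 := by rintro rfl; omega
    have := Nat.le_mul_of_pos_right (Nat.card K) (Nat.pos_of_ne_zero this)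
    omega
  by_contra! hsmall
  have huv : v = u + 1 := by
    have h1 : Nat.card K * (u + 1) ≤ Nat.card K * v := by rw [mul_add]; omega
    have h2 : Nat.card K * v < Nat.card K * (u + 2) := by rw [mul_add]; omega
    have := Nat.le_of_mul_le_mul_left h1 (by omega)
    have := Nat.lt_of_mul_lt_mul_left h2
    omega
  have hcrit : #(S + A) = #S + #A - 1 := by subst huv; rw [mul_add] at hv; omega
  obtain ⟨ζ, hζK, hζ⟩ := K.exists_sq_ne_one hK
  exact not_isArithProg_of_smul_eq hζ (MulAction.mem_stabilizer_iff.1 (hSAK hζK)) (by omega) hfar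
    (vosper hS2 (by omega) hcrit hlt)

lemma min_le_card_nsmul_s9 {K : Subgroup (ZMod p)ˣ} (hK : 2 < Nat.card K) {A : Finset (ZMod p)}
    (hA : K ≤ MulAction.stabilizer (ZMod p)ˣ A) (hA0 : 0 ∈ A) (hAcard : #A = Nat.card K + 1)
    (j : ℕ) : min p ((2 * j + 1) * Nat.card K + 1) ≤ #((j + 1) • A) := by
  induction j with
  | zero => simp [hAcard]
  | succ j ih =>
    rw [succ_nsmul _ (j + 1)]
    by_cases hfull : (j + 1) • A + A = univ
    · simp [hfull]
    have hS : #((j + 1) • A) < p := lt_of_le_of_lt (card_le_card (subset_add_left _ hA0))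
      (by simpa using card_lt_card (ssubset_univ_iff.2 hfull))
    have ih' := (min_le_iff.1 ih).resolve_left (by omega)
    have := add_two_mul_card_le_card_add hK (le_stabilizer_nsmul hA _) hA (zero_mem_nsmul hA0) hA0
      hAcard (by nlinarith) hfull
    exact min_le_of_right_le (by nlinarith)

end ZMod

theorem stmt_9_general (p n d h : ℕ) (hp : p.Prime) (hn : 1 ≤ n)
    (hd : d = Nat.gcd n (p - 1)) (hpd : 2 * d + 1 < p)
    (hh : h = (d + 2) / 2) :
    ∀ c : ZMod p, ∃ x : Fin h → ZMod p, ∑ i, x i ^ n = c := by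
  have := Fact.mk hp
  set K := (powMonoidHom n : (ZMod p)ˣ →* (ZMod p)ˣ).range
  have hKd : Nat.card K * d = p - 1 := by
    rw [IsCyclic.card_powMonoidHom_range, Nat.card_eq_fintype_card, ZMod.card_units, Nat.gcd_comm,
      ← hd, Nat.div_mul_cancel (hd ▸ Nat.gcd_dvd_right n (p - 1))]
  have hK : 2 < Nat.card K := by
    by_contra! hK
    have := Nat.mul_le_mul_right d hK
    omega
  have hcover : h • (univ.image fun x : ZMod p => x ^ n) = univ := by
    have := ZMod.min_le_card_nsmul_s9 hK le_stabilizer_image_pow (mem_image.2 ⟨0, mem_univ _,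
      zero_pow (by omega)⟩) (card_image_pow (by omega)) (h - 1)
    have hdh := Nat.mul_le_mul_right (Nat.card K) (show d ≤ 2 * (h - 1) + 1 by omega)
    rw [Nat.sub_add_cancel (by omega), min_eq_left (by rw [mul_comm] at hKd; omega)] at this
    exact eq_univ_of_card _ (le_antisymm (card_le_univ _) (by simpa using this))
  intro c
  exact exists_sum_eq_of_mem_nsmul_image (fun x : ZMod p => x ^ n)
    (by rw [hcover]; exact mem_univ c)

/-- Odd prime `p`, `n ≥ 1`, `d = gcd(n, p-1) > 1`, `p > 2d + 1`: with
`h = ⌈(d+1)/2⌉`, every element of `ℤ/pℤ` is a sum of `h` `n`-th powers. -/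
theorem stmt_9 (p n d h : ℕ) (hp : p.Prime) (hp2 : p ≠ 2) (hn : 1 ≤ n)
    (hd : d = Nat.gcd n (p - 1)) (hd1 : 1 < d) (hpd : 2 * d + 1 < p)
    (hh : h = (d + 2) / 2) :
    ∀ c : ZMod p, ∃ x : Fin h → ZMod p, ∑ i, x i ^ n = c :=
  stmt_9_general p n d h hp hn hd hpd hh
end

section
/- Let n ≥ 1 be an odd natural number and p an odd prime. Then with m = (p−1)/2, every element of ℤ/pℤ is a sum of m n-th powers; that is, for every c ∈ ℤ/pℤ there exist x_1, …, x_m ∈ ℤ/pℤ with x_1^n + ⋯ + x_m^n = c. -/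
lemma aux_sum_ite {p : ℕ} (m t n : ℕ) (ht : t ≤ m) (hn : 1 ≤ n) (a : ZMod p) :
    ∑ i : Fin m, (if (i : ℕ) < t then a else 0) ^ n = (t : ZMod p) * a ^ n := by
  rw [Fin.sum_univ_eq_sum_range (fun i => (if i < t then a else 0) ^ n)]
  have h1 : ∀ i, (if i < t then a else 0) ^ n = if i < t then a ^ n else 0 := by
    intro i; split <;> simp [zero_pow (by omega : n ≠ 0)]
  simp_rw [h1]
  rw [← Finset.sum_filter]
  have h2 : (Finset.range m).filter (· < t) = Finset.range t := by
    ext i; simp; omega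
  rw [h2, Finset.sum_const, Finset.card_range, nsmul_eq_mul]

/-- Odd `n ≥ 1`, odd prime `p`, `m = (p-1)/2`: every element of `ℤ/pℤ` is a sum
of `m` `n`-th powers. -/
theorem stmt_11 (n p m : ℕ) (hn : 1 ≤ n) (hnodd : Odd n)
    (hp : p.Prime) (hp2 : p ≠ 2) (hm : m = (p - 1) / 2) :
    ∀ c : ZMod p, ∃ x : Fin m → ZMod p, ∑ i, x i ^ n = c := by
  intro c
  haveI : Fact p.Prime := ⟨hp⟩
  have hodd : Odd p := hp.odd_of_ne_two hp2
  obtain ⟨k, hk⟩ := hodd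
  have hmk : m = k := by omega
  subst hmk
  have hv : c.val < p := ZMod.val_lt c
  have hcv : ((c.val : ℕ) : ZMod p) = c := ZMod.natCast_rightInverse c
  by_cases h : c.val ≤ m
  · refine ⟨fun i => if (i : ℕ) < c.val then 1 else 0, ?_⟩
    rw [aux_sum_ite m c.val n h hn 1, one_pow, mul_one, hcv]
  · refine ⟨fun i => if (i : ℕ) < p - c.val then -1 else 0, ?_⟩
    rw [aux_sum_ite m (p - c.val) n (by omega) hn (-1), hnodd.neg_one_pow,
      Nat.cast_sub hv.le]
    have hp0 : ((p : ℕ) : ZMod p) = 0 := ZMod.natCast_self p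
    rw [hp0, hcv]
    ring
end

section
/- Let n ≥ 3 be an odd natural number, let l = ⌈(n+1)/2⌉, let k be any integer, and let p be a prime with p < 2n + 1 and p ∤ n. Then for every i ≥ 1 there exist integers x_1, …, x_l such that x_1^n + ⋯ + x_l^n ≡ k (mod p^i). -/
open Finset Pointwise

private lemma sumset_step (p n m : ℕ) [NeZero p] :
    (Finset.image (fun f : Fin (m+1) → ZMod p => ∑ t, f t ^ n) univ)
      = (Finset.image (fun f : Fin m → ZMod p => ∑ t, f t ^ n) univ)
        + (Finset.image (fun x : ZMod p => x ^ n) univ) := by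
  ext y
  simp only [Finset.mem_add, Finset.mem_image, Finset.mem_univ, true_and]
  constructor
  · rintro ⟨f, rfl⟩
    refine ⟨∑ t, (f ∘ Fin.castSucc) t ^ n, ⟨_, rfl⟩, (f (Fin.last m))^n, ⟨_, rfl⟩, ?_⟩
    rw [Fin.sum_univ_castSucc]
    rfl
  · rintro ⟨a, ⟨g, rfl⟩, b, ⟨x, rfl⟩, rfl⟩
    refine ⟨Fin.snoc g x, ?_⟩
    rw [Fin.sum_univ_castSucc]
    simp

private lemma card_sum_pows (p n : ℕ) (hp : p.Prime) [NeZero p] (m : ℕ) :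
    min p (m * (#(Finset.image (fun x : ZMod p => x ^ n) Finset.univ) - 1) + 1)
      ≤ #(Finset.image (fun f : Fin m → ZMod p => ∑ t, f t ^ n) Finset.univ) := by
  induction m with
  | zero =>
      have : (Finset.image (fun f : Fin 0 → ZMod p => ∑ t, f t ^ n) Finset.univ) = {0} := by
        ext y; simp
      rw [this]
      simp [hp.pos]
  | succ m ih =>
      rw [sumset_step]
      set T := Finset.image (fun x : ZMod p => x ^ n) Finset.univ with hT
      set S := Finset.image (fun f : Fin m → ZMod p => ∑ t, f t ^ n) Finset.univ with hS
      have hTne : T.Nonempty := Finset.Nonempty.image ⟨0, Finset.mem_univ 0⟩ _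
      have hSne : S.Nonempty := Finset.Nonempty.image ⟨0, Finset.mem_univ 0⟩ _
      have hcd := ZMod.cauchy_davenport hp hSne hTne
      have hc1 : 1 ≤ #T := Finset.card_pos.mpr hTne
      have hmul : (m+1) * (#T - 1) = m * (#T - 1) + (#T - 1) := by ring
      omega


private lemma exists_modp (j p : ℕ) (hp : p.Prime) [NeZero p]
    (hpn : p < 2 * (2 * j + 1) + 1) (hpnd : ¬ p ∣ (2 * j + 1)) (hj : 1 ≤ j) (k : ZMod p) :
    ∃ x : Fin (j + 1) → ZMod p, x 0 = 1 ∧ ∑ t, x t ^ (2 * j + 1) = k := by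
  haveI : Fact p.Prime := ⟨hp⟩
  set n := 2 * j + 1 with hn
  set d := n.gcd (p - 1) with hd
  have hp2 : 2 ≤ p := hp.two_le
  have hdn : d ∣ n := Nat.gcd_dvd_left _ _
  have hdp : d ∣ p - 1 := Nat.gcd_dvd_right _ _
  have hd1 : 0 < d := Nat.gcd_pos_of_pos_left _ (by omega)
  have hdj : d ≤ j := by
    by_cases hdn' : d = n
    · exfalso
      have hnp : n ∣ p - 1 := hdn' ▸ hdp
      have h1 : n ≤ p - 1 := Nat.le_of_dvd (by omega) hnp
      have h2 : p - 1 = n := by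
        obtain ⟨c, hc⟩ := hnp
        have hc1 : 1 ≤ c := Nat.pos_of_ne_zero fun h => by subst h; simp at hc; omega
        have : c = 1 := by
          by_contra hne
          have hc2 : 2 ≤ c := by omega
          have h2n : n * 2 ≤ n * c := Nat.mul_le_mul (le_refl n) hc2
          omega
        rw [this, mul_one] at hc
        omega
      have : p = n + 1 := by omega
      have h2p : 2 ∣ p := by omega
      have := (Nat.Prime.eq_one_or_self_of_dvd hp 2 h2p).resolve_left (by omega)
      omega
    · obtain ⟨c, hc⟩ := hdn
      have hc2 : 2 ≤ c := by
        rcases Nat.lt_or_ge c 2 with h | h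
        · interval_cases c <;> omega
        · exact h
      have hcodd : ¬ 2 ∣ c := fun h2c => by
        have : 2 ∣ n := hc ▸ Dvd.dvd.mul_left h2c d
        omega
      have hc3 : 3 ≤ c := by omega
      nlinarith
  classical
  set T := Finset.image (fun x : ZMod p => x ^ n) Finset.univ with hT
  have hfib : ∀ a ∈ (Finset.univ.erase (0:ZMod p)).image (fun x => x ^ n),
      #((Finset.univ.erase (0:ZMod p)).filter (fun x => x ^ n = a)) ≤ d := by
    intro a ha
    obtain ⟨x0, hx0, hx0a⟩ := Finset.mem_image.mp ha
    have hx00 : x0 ≠ 0 := (Finset.mem_erase.mp hx0).1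
    have hsub : (Finset.univ.erase (0:ZMod p)).filter (fun x => x ^ n = a)
        ⊆ (Polynomial.nthRoots d (x0 ^ d)).toFinset := by
      intro x hx
      obtain ⟨hxe, hxn⟩ := Finset.mem_filter.mp hx
      have hx0' : x ≠ 0 := (Finset.mem_erase.mp hxe).1
      rw [Multiset.mem_toFinset, Polynomial.mem_nthRoots hd1]
      have hu : (x * x0⁻¹) ^ d = 1 := by
        have h1 : (x * x0⁻¹) ^ n = 1 := by
          rw [mul_pow, hxn, ← hx0a, inv_pow, mul_inv_cancel₀ (pow_ne_zero _ hx00)]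
        have h2 : (x * x0⁻¹) ^ (p - 1) = 1 :=
          ZMod.pow_card_sub_one_eq_one (mul_ne_zero hx0' (inv_ne_zero hx00))
        have hdvd : orderOf (x * x0⁻¹) ∣ d :=
          Nat.dvd_gcd (orderOf_dvd_of_pow_eq_one h1) (orderOf_dvd_of_pow_eq_one h2)
        exact orderOf_dvd_iff_pow_eq_one.mp hdvd
      calc x ^ d = (x * x0⁻¹) ^ d * x0 ^ d := by
            rw [mul_pow, inv_pow, mul_assoc, inv_mul_cancel₀ (pow_ne_zero _ hx00), mul_one]
        _ = x0 ^ d := by rw [hu, one_mul]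
    calc _ ≤ _ := Finset.card_le_card hsub
      _ ≤ Multiset.card (Polynomial.nthRoots d (x0 ^ d)) := Multiset.toFinset_card_le _
      _ ≤ d := Polynomial.card_nthRoots d _
  have hkey := Finset.card_le_mul_card_image (Finset.univ.erase (0:ZMod p)) d hfib
  have herase : #(Finset.univ.erase (0:ZMod p)) = p - 1 := by
    rw [Finset.card_erase_of_mem (Finset.mem_univ _), Finset.card_univ, ZMod.card p]
  have him : (Finset.univ.erase (0:ZMod p)).image (fun x => x ^ n) ⊆ T.erase 0 := by
    intro a ha
    obtain ⟨x0, hx0, rfl⟩ := Finset.mem_image.mp ha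
    exact Finset.mem_erase.mpr ⟨pow_ne_zero _ (Finset.mem_erase.mp hx0).1,
      Finset.mem_image.mpr ⟨x0, Finset.mem_univ _, rfl⟩⟩
  have h0T : (0:ZMod p) ∈ T :=
    Finset.mem_image.mpr ⟨0, Finset.mem_univ _, by rw [zero_pow (by omega)]⟩
  have hTbound : p - 1 ≤ d * (#T - 1) := by
    calc p - 1 = #(Finset.univ.erase (0:ZMod p)) := herase.symm
      _ ≤ d * #((Finset.univ.erase (0:ZMod p)).image (fun x => x ^ n)) := hkey
      _ ≤ d * #(T.erase 0) := Nat.mul_le_mul_left _ (Finset.card_le_card him)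
      _ = d * (#T - 1) := by rw [Finset.card_erase_of_mem h0T]
  have hcard := card_sum_pows p n hp j
  have hbig : p ≤ j * (#T - 1) + 1 := by
    have h9 : d * (#T - 1) ≤ j * (#T - 1) := Nat.mul_le_mul_right _ hdj
    have h8 := hTbound
    revert h8 h9
    generalize (#T - 1) = c
    intro h8 h9
    clear * - h8 h9 hp2
    omega
  have hSuniv : (Finset.image (fun f : Fin j → ZMod p => ∑ t, f t ^ n) Finset.univ)
      = Finset.univ := by
    apply Finset.eq_univ_of_card
    have h1 : p ≤ #(Finset.image (fun f : Fin j → ZMod p => ∑ t, f t ^ n) Finset.univ) := by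
      refine le_trans ?_ hcard
      rw [min_eq_left hbig]
    have h2 := Finset.card_le_univ (Finset.image (fun f : Fin j → ZMod p => ∑ t, f t ^ n)
      Finset.univ)
    rw [ZMod.card p] at h2 ⊢
    exact le_antisymm h2 h1
  have hk : (k - 1) ∈ (Finset.image (fun f : Fin j → ZMod p => ∑ t, f t ^ n) Finset.univ) := by
    rw [hSuniv]; exact Finset.mem_univ _
  obtain ⟨f, -, hf⟩ := Finset.mem_image.mp hk
  refine ⟨Fin.cons 1 f, Fin.cons_zero _ _, ?_⟩
  rw [Fin.sum_univ_succ]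
  simp only [Fin.cons_zero, Fin.cons_succ, one_pow, hf]
  ring

/-- Odd `n ≥ 3`, `l = ⌈(n+1)/2⌉`, any integer `k`, prime `p < 2n + 1` with
`p ∤ n`: the congruence `x₁ⁿ + ⋯ + x_lⁿ ≡ k (mod pⁱ)` is solvable for every
`i ≥ 1`. -/
theorem stmt_12 (n l p : ℕ) (k : ℤ) (hn3 : 3 ≤ n) (hnodd : Odd n)
    (hl : l = (n + 1) / 2) (hp : p.Prime) (hpn : p < 2 * n + 1) (hpnd : ¬ p ∣ n) :
    ∀ i, 1 ≤ i → ∃ x : Fin l → ℤ, (∑ t, x t ^ n) ≡ k [ZMOD (p : ℤ) ^ i] := by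
  intro i hi
  haveI : Fact p.Prime := ⟨hp⟩
  haveI : NeZero p := ⟨hp.pos.ne'⟩
  obtain ⟨j, hj⟩ : ∃ j, n = 2 * j + 1 := hnodd
  have hj1 : 1 ≤ j := by omega
  have hlj : l = j + 1 := by omega
  subst hj hlj
  set n := 2 * j + 1 with hn
  obtain ⟨s, hs0, hssum⟩ := exists_modp j p hp hpn hpnd hj1 ((k : ZMod p))
  set a : Fin (j+1) → ℤ := fun t => ((s t).val : ℤ) with ha
  have hacast : ∀ t, ((a t : ℤ) : ZMod p) = s t := fun t => by
    simp [ha, ZMod.natCast_val, ZMod.cast_id]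
  set A : ℤ := ∑ t ∈ Finset.univ.erase 0, a t ^ n with hA
  set e : ℤ := a 0 ^ n + A - k with he
  have hpe : (p : ℤ) ∣ e := by
    rw [← ZMod.intCast_zmod_eq_zero_iff_dvd]
    push_cast [he, hA]
    simp only [hacast]
    rw [Finset.add_sum_erase _ (fun t => s t ^ n) (Finset.mem_univ 0), hssum]
    ring
  have ha0 : ((a 0 : ℤ) : ZMod p) = 1 := by rw [hacast, hs0]
  have hnd : ¬ (p : ℤ) ∣ ((n : ℤ) * a 0 ^ (n - 1)) := by
    rw [← ZMod.intCast_zmod_eq_zero_iff_dvd]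
    push_cast
    rw [ha0, one_pow, mul_one]
    intro hcon
    have hcon' : ((n : ℕ) : ZMod p) = 0 := by exact_mod_cast hcon
    exact hpnd ((ZMod.natCast_eq_zero_iff n p).mp hcon')
  -- Hensel
  set c : ℤ_[p] := ((k - A : ℤ) : ℤ_[p]) with hc
  set F : Polynomial ℤ_[p] := Polynomial.X ^ n - Polynomial.C c with hF
  set a₀ : ℤ_[p] := ((a 0 : ℤ) : ℤ_[p]) with ha₀
  have hFeval : F.eval a₀ = ((e : ℤ) : ℤ_[p]) := by
    simp [hF, hc, he, ha₀]
    push_cast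
    ring
  have hFderiv : F.derivative.eval a₀ = (((n : ℤ) * a 0 ^ (n - 1) : ℤ) : ℤ_[p]) := by
    simp [hF, Polynomial.derivative_X_pow, ha₀]
  have hnorm1 : ‖F.derivative.eval a₀‖ = 1 := by
    rw [hFderiv]
    have h1 : ‖(((n : ℤ) * a 0 ^ (n - 1) : ℤ) : ℤ_[p])‖ ≤ 1 := PadicInt.norm_le_one _
    have h2 : ¬ ‖(((n : ℤ) * a 0 ^ (n - 1) : ℤ) : ℤ_[p])‖ < 1 := fun hcon =>
      hnd ((PadicInt.norm_int_lt_one_iff_dvd _).mp hcon)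
    linarith
  have hnorm : ‖F.eval a₀‖ < ‖F.derivative.eval a₀‖ ^ 2 := by
    rw [hnorm1, one_pow, hFeval]
    calc ‖((e : ℤ) : ℤ_[p])‖ ≤ (p : ℝ) ^ (-(1:ℕ) : ℤ) := by
          rw [PadicInt.norm_int_le_pow_iff_dvd, pow_one]
          exact hpe
      _ < 1 := by
          have hp1 : (1:ℝ) < (p:ℝ) := by exact_mod_cast hp.one_lt
          rw [show (-(1:ℕ) : ℤ) = -1 by norm_num, zpow_neg, zpow_one, inv_lt_one_iff₀]
          right; exact hp1
  obtain ⟨z, hz, -, -, -⟩ := hensels_lemma hnorm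
  have hzn : z ^ n = c := by
    have : z ^ n - c = 0 := by simpa [hF] using hz
    exact sub_eq_zero.mp this
  classical
  set w : Fin (j+1) → ℤ_[p] := Function.update (fun t => ((a t : ℤ) : ℤ_[p])) 0 z with hw
  have hwsum : ∑ t, w t ^ n = ((k : ℤ) : ℤ_[p]) := by
    rw [← Finset.add_sum_erase _ (fun t => w t ^ n) (Finset.mem_univ 0)]
    have hw0 : w 0 = z := Function.update_self _ _ _
    have hrest : ∑ t ∈ Finset.univ.erase 0, w t ^ n
        = ∑ t ∈ Finset.univ.erase 0, ((a t : ℤ) : ℤ_[p]) ^ n := by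
      refine Finset.sum_congr rfl fun t ht => ?_
      rw [hw, Function.update_of_ne (Finset.mem_erase.mp ht).1]
    rw [hw0, hrest, hzn, hc]
    have : ∑ t ∈ Finset.univ.erase 0, ((a t : ℤ) : ℤ_[p]) ^ n = ((A : ℤ) : ℤ_[p]) := by
      rw [hA]
      push_cast
      rfl
    rw [this]
    push_cast
    ring
  set x : Fin (j+1) → ℤ := fun t => ((w t).appr i : ℤ) with hx
  have hdvdt : ∀ t, (p : ℤ_[p]) ^ i ∣ ((x t : ℤ) : ℤ_[p]) - w t := by
    intro t
    have h1 := PadicInt.appr_spec i (w t)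
    rw [Ideal.mem_span_singleton] at h1
    have : ((x t : ℤ) : ℤ_[p]) - w t = -(w t - ((w t).appr i : ℕ)) := by
      rw [hx]
      push_cast
      ring
    rw [this]
    exact (dvd_neg).mpr h1
  have hdvdsum : (p : ℤ_[p]) ^ i ∣ (((∑ t, x t ^ n) - k : ℤ) : ℤ_[p]) := by
    have : (((∑ t, x t ^ n) - k : ℤ) : ℤ_[p]) = ∑ t, (((x t : ℤ) : ℤ_[p]) ^ n - w t ^ n) := by
      rw [Finset.sum_sub_distrib, hwsum]
      push_cast
      ring
    rw [this]
    refine Finset.dvd_sum fun t _ => dvd_trans (hdvdt t) (sub_dvd_pow_sub_pow _ _ n)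
  have hnormle : ‖(((∑ t, x t ^ n) - k : ℤ) : ℤ_[p])‖ ≤ (p : ℝ) ^ (-(i:ℕ) : ℤ) := by
    obtain ⟨m, hm⟩ := hdvdsum
    rw [hm, norm_mul, PadicInt.norm_p_pow]
    calc ((p:ℝ) ^ (-(i:ℕ) : ℤ)) * ‖m‖ ≤ ((p:ℝ) ^ (-(i:ℕ) : ℤ)) * 1 :=
          mul_le_mul_of_nonneg_left (PadicInt.norm_le_one m) (by positivity)
      _ = _ := mul_one _
  have hfinal : ((p : ℤ)) ^ i ∣ (∑ t, x t ^ n) - k := by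
    have := PadicInt.norm_int_le_pow_iff_dvd.mp hnormle
    exact_mod_cast this
  exact ⟨x, (Int.modEq_iff_dvd).mpr (by rw [show k - ∑ t, x t ^ n = -((∑ t, x t ^ n) - k) by ring]; exact (dvd_neg).mpr hfinal)⟩
end

section
/- Let n ≥ 2 be an even natural number, let l = max{⌈2n/3⌉, ⌈(n+2)/2⌉}, and let p be a prime with p < 2n + 1, p ∤ n and p ≠ n + 1. Then for every integer k and every i ≥ 1 there exist integers x_1, …, x_l such that x_1^n + ⋯ + x_l^n ≡ k (mod p^i). -/
open Finset Polynomial Pointwise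

private def iterSum (p : ℕ) (S : Finset (ZMod p)) : ℕ → Finset (ZMod p)
  | 0 => {0}
  | (m + 1) => iterSum p S m + S

private lemma iterSum_nonempty (p : ℕ) (S : Finset (ZMod p)) (hS : S.Nonempty) :
    ∀ m, (iterSum p S m).Nonempty
  | 0 => ⟨0, by simp [iterSum]⟩
  | (m + 1) => (iterSum_nonempty p S hS m).add hS

private lemma iterSum_card (p : ℕ) (hp : p.Prime) (S : Finset (ZMod p)) (hS : S.Nonempty) :
    ∀ m, min p (m * (#S - 1) + 1) ≤ #(iterSum p S m)
  | 0 => by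
      simp only [iterSum, Finset.card_singleton, Nat.zero_mul]
      exact le_trans (min_le_right _ _) le_rfl
  | (m + 1) => by
      have h1 := iterSum_card p hp S hS m
      have h2 := ZMod.cauchy_davenport hp (iterSum_nonempty p S hS m) hS
      have hS1 : 1 ≤ #S := hS.card_pos
      simp only [iterSum]
      set A := iterSum p S m with hA
      rcases le_or_gt p #A with hcase | hcase
      · have hmin : min p (#A + #S - 1) = p := min_eq_left (by omega)
        rw [hmin] at h2
        exact le_trans (min_le_left _ _) h2
      · have hX : m * (#S - 1) + 1 ≤ #A := by
          rcases min_cases p (m * (#S - 1) + 1) with ⟨h, h'⟩ | ⟨h, h'⟩ <;> omega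
        have hle : (m + 1) * (#S - 1) + 1 ≤ #A + #S - 1 := by
          have : (m + 1) * (#S - 1) = m * (#S - 1) + (#S - 1) := by ring
          set q := m * (#S - 1)
          omega
        exact le_trans (le_trans (min_le_min le_rfl hle) (min_le_min le_rfl le_rfl)) h2

private lemma iterSum_mem (p : ℕ) (S : Finset (ZMod p)) :
    ∀ m, ∀ c ∈ iterSum p S m, ∃ f : Fin m → ZMod p, (∀ t, f t ∈ S) ∧ ∑ t, f t = c
  | 0 => by
      intro c hc
      simp only [iterSum, Finset.mem_singleton] at hc
      exact ⟨fun t => 0, fun t => t.elim0, by simp [hc]⟩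
  | (m + 1) => by
      intro c hc
      simp only [iterSum] at hc
      rw [Finset.mem_add] at hc
      obtain ⟨b, hb, s, hs, rfl⟩ := hc
      obtain ⟨f, hf, hsum⟩ := iterSum_mem p S m b hb
      refine ⟨Fin.snoc f s, ?_, ?_⟩
      · intro t
        refine Fin.lastCases ?_ ?_ t
        · simpa using hs
        · intro j; simpa using hf j
      · rw [Fin.sum_univ_castSucc]
        simp [hsum]

private lemma key_repr (p n m : ℕ) (hp : p.Prime) (hn : 1 ≤ n)
    (hm : Nat.gcd n (p - 1) ≤ m) :
    ∀ c : ZMod p, ∃ f : Fin m → ZMod p, ∑ t, f t ^ n = c := by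
  haveI : Fact p.Prime := ⟨hp⟩
  haveI : NeZero p := ⟨hp.pos.ne'⟩
  classical
  set d := Nat.gcd n (p - 1) with hd
  have hd1 : 1 ≤ d := Nat.gcd_pos_of_pos_left _ (by omega)
  set S0 : Finset (ZMod p) := (univ.erase 0).image (· ^ n) with hS0
  have hfib : ∀ b ∈ (univ.erase (0 : ZMod p)).image (· ^ n),
      #{a ∈ univ.erase (0 : ZMod p) | a ^ n = b} ≤ d := by
    intro b hb
    obtain ⟨x0, hx0, rfl⟩ := Finset.mem_image.1 hb
    have hx0' : (x0 : ZMod p) ≠ 0 := (Finset.mem_erase.1 hx0).1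
    have hsub : {a ∈ univ.erase (0 : ZMod p) | a ^ n = x0 ^ n} ⊆
        ((X : (ZMod p)[X]) ^ d - C (x0 ^ d)).roots.toFinset := by
      intro a ha
      rw [Finset.mem_filter, Finset.mem_erase] at ha
      obtain ⟨⟨ha0, -⟩, han⟩ := ha
      have hu : (a / x0) ^ n = 1 := by
        rw [div_pow, han, div_self (pow_ne_zero _ hx0')]
      have hu2 : (a / x0) ^ (p - 1) = 1 :=
        ZMod.pow_card_sub_one_eq_one (div_ne_zero ha0 hx0')
      have hud : (a / x0) ^ d = 1 := by
        refine orderOf_dvd_iff_pow_eq_one.1 ?_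
        exact Nat.dvd_gcd (orderOf_dvd_of_pow_eq_one hu) (orderOf_dvd_of_pow_eq_one hu2)
      have had : a ^ d = x0 ^ d := by
        rw [div_pow] at hud
        exact (div_eq_one_iff_eq (pow_ne_zero _ hx0')).1 hud
      rw [Multiset.mem_toFinset, Polynomial.mem_roots']
      refine ⟨X_pow_sub_C_ne_zero (by omega) _, ?_⟩
      simp [Polynomial.IsRoot, had]
    calc #{a ∈ univ.erase (0 : ZMod p) | a ^ n = x0 ^ n}
        ≤ #(((X : (ZMod p)[X]) ^ d - C (x0 ^ d)).roots.toFinset) := Finset.card_le_card hsub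
      _ ≤ Multiset.card ((X : (ZMod p)[X]) ^ d - C (x0 ^ d)).roots := Multiset.toFinset_card_le _
      _ ≤ ((X : (ZMod p)[X]) ^ d - C (x0 ^ d)).natDegree := Polynomial.card_roots' _
      _ = d := natDegree_X_pow_sub_C
  have hcard0 : p - 1 ≤ d * #S0 := by
    have h := Finset.card_le_mul_card_image (univ.erase (0 : ZMod p)) d hfib
    have hce : #(univ.erase (0 : ZMod p)) = p - 1 := by
      rw [Finset.card_erase_of_mem (Finset.mem_univ _), Finset.card_univ, ZMod.card]
    rw [hce] at h
    exact h
  have h0S0 : (0 : ZMod p) ∉ S0 := by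
    simp only [hS0, Finset.mem_image]
    rintro ⟨x, hx, hxn⟩
    exact (Finset.mem_erase.1 hx).1 (pow_eq_zero_iff (by omega) |>.1 hxn)
  set S : Finset (ZMod p) := insert 0 S0 with hS
  have hScard : #S = #S0 + 1 := Finset.card_insert_of_notMem h0S0
  have hSne : S.Nonempty := Finset.insert_nonempty _ _
  have hpow : ∀ b ∈ S, ∃ y : ZMod p, y ^ n = b := by
    intro b hb
    rcases Finset.mem_insert.1 hb with rfl | hb'
    · exact ⟨0, zero_pow (by omega)⟩
    · obtain ⟨y, -, hy⟩ := Finset.mem_image.1 hb'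
      exact ⟨y, hy⟩
  have hfull : p ≤ #(iterSum p S m) := by
    have h := iterSum_card p hp S hSne m
    have hple : p ≤ m * (#S - 1) + 1 := by
      have h2 : d * #S0 ≤ m * #S0 := Nat.mul_le_mul_right _ hm
      have h3 : #S - 1 = #S0 := by omega
      rw [h3]
      have := hp.two_le
      omega
    rw [min_eq_left hple] at h
    exact h
  have huniv : iterSum p S m = univ := by
    apply Finset.eq_univ_of_card
    refine le_antisymm (le_trans (Finset.card_le_univ _) le_rfl) ?_
    rw [ZMod.card]
    exact hfull
  intro c
  have hc : c ∈ iterSum p S m := huniv ▸ Finset.mem_univ c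
  obtain ⟨f, hf, hsum⟩ := iterSum_mem p S m c hc
  choose g hg using fun t => hpow (f t) (hf t)
  exact ⟨g, by rw [Finset.sum_congr rfl (fun t _ => hg t)]; exact hsum⟩

/-- Even `n ≥ 2`, `l = max{⌈2n/3⌉, ⌈(n+2)/2⌉}`, prime `p < 2n + 1` with `p ∤ n`
and `p ≠ n + 1`: for every integer `k` and every `i ≥ 1` the congruence
`x₁ⁿ + ⋯ + x_lⁿ ≡ k (mod pⁱ)` is solvable. -/
theorem stmt_19 (n l p : ℕ) (hn : 2 ≤ n) (hneven : Even n)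
    (hl : l = max ((2 * n + 2) / 3) ((n + 2) / 2))
    (hp : p.Prime) (hpn : p < 2 * n + 1) (hpnd : ¬ p ∣ n) (hpn1 : p ≠ n + 1) :
    ∀ k : ℤ, ∀ i, 1 ≤ i →
      ∃ x : Fin l → ℤ, (∑ t, x t ^ n) ≡ k [ZMOD (p : ℤ) ^ i] := by
  haveI : Fact p.Prime := ⟨hp⟩
  haveI : NeZero p := ⟨hp.pos.ne'⟩
  have hp2 : p ≠ 2 := by
    rintro rfl
    exact hpnd hneven.two_dvd
  have hp3 : 3 ≤ p := by have := hp.two_le; omega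
  set d := Nat.gcd n (p - 1) with hd
  have hdvd : d ∣ n := Nat.gcd_dvd_left _ _
  have hd1 : 1 ≤ d := Nat.gcd_pos_of_pos_left _ (by omega)
  have hdn : d ≠ n := by
    intro h
    have h1 : n ∣ p - 1 := h ▸ Nat.gcd_dvd_right n (p - 1)
    obtain ⟨c, hc⟩ := h1
    have hc1 : c = 1 := by
      rcases c with _ | _ | c
      · omega
      · rfl
      · have h2n : n * 2 ≤ n * (c + 1 + 1) := Nat.mul_le_mul_left _ (by omega)
        omega
    rw [hc1, mul_one] at hc
    exact hpn1 (by omega)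
  have h2d : 2 * d ≤ n := by
    obtain ⟨e, he⟩ := hdvd
    rcases e with _ | _ | e
    · omega
    · exact absurd (by omega) hdn
    · have h2e : d * 2 ≤ d * (e + 1 + 1) := Nat.mul_le_mul_left _ (by omega)
      omega
  have hln : (n + 2) / 2 ≤ l := hl ▸ le_max_right _ _
  have hld : d + 1 < l + 1 := by
    obtain ⟨a, ha⟩ := hneven
    omega
  obtain ⟨m, rfl⟩ : ∃ m, l = m + 1 := ⟨l - 1, by omega⟩
  have hmd : d ≤ m := by omega
  -- base representation modulo p
  have hbase : ∀ k : ℤ, ∃ (a : ℤ) (g : Fin m → ℤ), ¬ (p : ℤ) ∣ a ∧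
      (a ^ n + ∑ t, g t ^ n) ≡ k [ZMOD (p : ℤ)] := by
    intro k
    obtain ⟨f, hf⟩ := key_repr p n m hp (by omega) hmd (((k - 1 : ℤ) : ZMod p))
    refine ⟨1, fun t => ((f t).val : ℤ), ?_, ?_⟩
    · intro hdvd1
      have := Int.le_of_dvd one_pos hdvd1
      have := hp.two_le
      omega
    · rw [← ZMod.intCast_eq_intCast_iff]
      push_cast
      have hv : ∀ t : Fin m, (((f t).val : ℕ) : ZMod p) = f t := fun t => by
        rw [ZMod.natCast_val, ZMod.cast_id]
      calc (1 : ZMod p) ^ n + ∑ t, (((f t).val : ℕ) : ZMod p) ^ n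
          = 1 + ∑ t, (f t) ^ n := by
            rw [one_pow]
            exact congrArg _ (Finset.sum_congr rfl fun t _ => by rw [hv t])
        _ = 1 + ((k : ZMod p) - 1) := by rw [hf]; push_cast; ring
        _ = (k : ZMod p) := by ring
  -- Hensel lifting
  have hstep : ∀ i : ℕ, 1 ≤ i → ∀ k : ℤ, ∃ (a : ℤ) (g : Fin m → ℤ), ¬ (p : ℤ) ∣ a ∧
      (a ^ n + ∑ t, g t ^ n) ≡ k [ZMOD (p : ℤ) ^ i] := by
    intro i hi
    induction i, hi using Nat.le_induction with
    | base =>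
        intro k
        obtain ⟨a, g, h1, h2⟩ := hbase k
        exact ⟨a, g, h1, by rwa [pow_one]⟩
    | succ i hi ih =>
        intro k
        obtain ⟨a, g, ha, hcong⟩ := ih k
        obtain ⟨c, hc⟩ := Int.ModEq.dvd hcong
        -- hc : k - (a^n + ∑) = p^i * c
        have hnz : ((n : ZMod p) * (a : ZMod p) ^ (n - 1)) ≠ 0 := by
          refine mul_ne_zero ?_ (pow_ne_zero _ ?_)
          · rw [Ne, ZMod.natCast_eq_zero_iff]
            exact hpnd
          · rw [Ne, ZMod.intCast_zmod_eq_zero_iff_dvd]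
            exact ha
        set u : ZMod p := (c : ZMod p) * ((n : ZMod p) * (a : ZMod p) ^ (n - 1))⁻¹ with hu
        obtain ⟨w, hwcast⟩ : ∃ w : ℤ, ((w : ℤ) : ZMod p) = u :=
          ⟨(u.val : ℤ), by rw [Int.cast_natCast, ZMod.natCast_val, ZMod.cast_id]⟩
        have ht : (p : ℤ) ∣ ((n : ℤ) * a ^ (n - 1) * w - c) := by
          rw [← ZMod.intCast_zmod_eq_zero_iff_dvd]
          push_cast
          rw [hwcast, hu, mul_comm ((c : ZMod p)) (((n : ZMod p) * (a : ZMod p) ^ (n - 1))⁻¹),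
            ← mul_assoc, mul_inv_cancel₀ hnz, one_mul, sub_self]
        obtain ⟨kk, hkk⟩ := (X ^ n : ℤ[X]).binomExpansion a (w * (p : ℤ) ^ i)
        simp only [eval_pow, eval_X, derivative_X_pow, eval_mul, eval_C, eval_natCast] at hkk
        refine ⟨a + w * (p : ℤ) ^ i, g, ?_, ?_⟩
        · intro hdvd1
          apply ha
          have hpq : (p : ℤ) ∣ w * (p : ℤ) ^ i := by
            refine Dvd.dvd.mul_left ?_ w
            exact dvd_pow_self _ (by omega)
          simpa using hdvd1.sub hpq
        · rw [Int.modEq_iff_dvd]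
          have hkey : k - ((a + w * (p : ℤ) ^ i) ^ n + ∑ t, g t ^ n) =
              -(((n : ℤ) * a ^ (n - 1) * w - c) * (p : ℤ) ^ i)
                - kk * w ^ 2 * ((p : ℤ) ^ i) ^ 2 := by
            rw [hkk]
            linear_combination hc
          rw [hkey, pow_succ]
          have d1 : (p : ℤ) ^ i * (p : ℤ) ∣
              -(((n : ℤ) * a ^ (n - 1) * w - c) * (p : ℤ) ^ i) := by
            rw [dvd_neg, mul_comm ((p : ℤ) ^ i) (p : ℤ)]
            exact mul_dvd_mul ht dvd_rfl
          have d2 : (p : ℤ) ^ i * (p : ℤ) ∣ kk * w ^ 2 * ((p : ℤ) ^ i) ^ 2 := by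
            have h1 : (p : ℤ) ^ i * (p : ℤ) ∣ (p : ℤ) ^ i * (p : ℤ) ^ i :=
              mul_dvd_mul_left _ (dvd_pow_self _ (by omega))
            rw [sq ((p : ℤ) ^ i)]
            exact h1.mul_left _
          exact dvd_sub d1 d2
  intro k i hi
  obtain ⟨a, g, -, hcong⟩ := hstep i hi k
  refine ⟨Fin.cons a g, ?_⟩
  rw [Fin.sum_univ_succ]
  simpa using hcong
end
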